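/- arXiv:2106.03403 — 9 statements merged into one kernel-verified Lean document; each statement's English description precedes it below -/
import Mathlib

section
/- In the IC one-step sampling model, for any two distinct nodes u, v ∈ V with 0 < q(u) < 1 and ap(v|ū) < 1, the edge probability satisfies p(u,v) = (ap(v) − ap(v|ū)) / (q(u) · (1 − ap(v|ū))). -/
/-!
Split the one-step activation event of `v` as `({X u} ∩ {Y u v}) ∪ C`, where
`C = activatedAvoiding X Y i u v` is activation of `v` by its own seed or by a seed other
than `u`. The event `C` is built from variables other than `X u` and `Y u v`, hence is
independent of `σ(X u, Y u v)`. Conditioning on `¬ X u` therefore gives `ap(v|ū) = P C =: c`,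
while inclusion–exclusion gives `ap(v) = q p + c - q p c`, i.e. `ap(v) - ap(v|ū) = q p (1 - c)`.
-/

set_option autoImplicit false

open MeasureTheory ProbabilityTheory Set

section IndepSet

variable {Ω : Type*} {mΩ : MeasurableSpace Ω} {μ : Measure Ω} {s t : Set Ω}

lemma ProbabilityTheory.IndepSet.measureReal_inter_eq_mul (h : IndepSet s t μ) :
    μ.real (s ∩ t) = μ.real s * μ.real t := by
  simp [measureReal_def, h.measure_inter_eq_mul]

lemma ProbabilityTheory.IndepSet.measureReal_union [IsFiniteMeasure μ] (h : IndepSet s t μ)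
    (hs : MeasurableSet s) :
    μ.real (s ∪ t) = μ.real s + μ.real t - μ.real s * μ.real t := by
  linarith [measureReal_union_add_inter' (μ := μ) (t := t) hs, h.measureReal_inter_eq_mul]

theorem measureReal_eq_div_of_indepSet [IsProbabilityMeasure μ] {E F C : Set Ω}
    (hE : MeasurableSet E) (hF : MeasurableSet F)
    (hEF : IndepSet E F μ) (hEFC : IndepSet (E ∩ F) C μ) (hEC : IndepSet Eᶜ C μ)
    (hE0 : 0 < μ.real E) (hE1 : μ.real E < 1)
    (hC1 : μ.real ((E ∩ F ∪ C) ∩ Eᶜ) / μ.real Eᶜ < 1) :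
    μ.real F = (μ.real (E ∩ F ∪ C) - μ.real ((E ∩ F ∪ C) ∩ Eᶜ) / μ.real Eᶜ) /
      (μ.real E * (1 - μ.real ((E ∩ F ∪ C) ∩ Eᶜ) / μ.real Eᶜ)) := by
  have hEc : μ.real Eᶜ = 1 - μ.real E := probReal_compl_eq_one_sub hE
  have hcond : μ.real ((E ∩ F ∪ C) ∩ Eᶜ) / μ.real Eᶜ = μ.real C := by
    have hinter : (E ∩ F ∪ C) ∩ Eᶜ = Eᶜ ∩ C := by
      ext ω; simp only [mem_inter_iff, mem_union, mem_compl_iff]; tauto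
    rw [hinter, hEC.measureReal_inter_eq_mul, hEc]
    field_simp [(sub_pos.2 hE1).ne']
  have hunion : μ.real (E ∩ F ∪ C) = μ.real E * μ.real F + μ.real C
      - μ.real E * μ.real F * μ.real C := by
    rw [hEFC.measureReal_union (hE.inter hF), hEF.measureReal_inter_eq_mul]
  rw [hcond] at hC1 ⊢
  rw [hunion]
  field_simp [hE0.ne', (sub_pos.2 hC1).ne']
  ring

end IndepSet

section Model

variable {V Ω : Type*} {mΩ : MeasurableSpace Ω} {μ : Measure Ω} {t : ℕ}
  (X : Fin t → V → Ω → Bool) (Y : Fin t → V → V → Ω → Bool)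

def icVars : (Fin t × V) ⊕ (Fin t × {a : V × V // a.1 ≠ a.2}) → Ω → Bool :=
  Sum.elim (fun a => X a.1 a.2) (fun a => Y a.1 a.2.1.1 a.2.1.2)

def activatedAvoiding (i : Fin t) (u v : V) : Set Ω :=
  {ω | X i v ω = true ∨ ∃ w, w ≠ v ∧ w ≠ u ∧ X i w ω = true ∧ Y i w v ω = true}

variable {X Y}

lemma setOf_activated_eq_union {i : Fin t} {u v : V} (huv : u ≠ v) :
    {ω | X i v ω = true ∨ ∃ w, w ≠ v ∧ X i w ω = true ∧ Y i w v ω = true} =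
      {ω | X i u ω = true} ∩ {ω | Y i u v ω = true} ∪ activatedAvoiding X Y i u v := by
  ext ω
  simp only [activatedAvoiding, mem_ofPred_eq, mem_union, mem_inter_iff]
  constructor
  · rintro (hv | ⟨w, hwv, hXw, hYw⟩)
    · exact .inr (.inl hv)
    · by_cases hwu : w = u
      · subst hwu; exact .inl ⟨hXw, hYw⟩
      · exact .inr (.inr ⟨w, hwv, hwu, hXw, hYw⟩)
  · rintro (⟨hXu, hYu⟩ | hv | ⟨w, hwv, -, hXw, hYw⟩)
    · exact .inr ⟨u, huv, hXu, hYu⟩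
    · exact .inl hv
    · exact .inr ⟨w, hwv, hXw, hYw⟩

lemma indepSet_activatedAvoiding [Finite V] (hXmeas : ∀ i u, Measurable (X i u))
    (hYmeas : ∀ i u v, Measurable (Y i u v)) (hindep : iIndepFun (icVars X Y) μ)
    {i : Fin t} {u v : V} (huv : u ≠ v) {s : Set Ω}
    (hs : MeasurableSet[.comap (X i u) inferInstance ⊔ .comap (Y i u v) inferInstance] s) :
    IndepSet s (activatedAvoiding X Y i u v) μ := by
  let m j : MeasurableSpace Ω := .comap (icVars X Y j) inferInstance
  let S : Set ((Fin t × V) ⊕ (Fin t × {a : V × V // a.1 ≠ a.2})) :=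
    {.inl (i, u), .inr (i, ⟨(u, v), huv⟩)}
  have hle (j) : m j ≤ mΩ := by
    rcases j with ⟨i, u⟩ | ⟨i, ⟨⟨u, v⟩, -⟩⟩
    exacts [(hXmeas i u).comap_le, (hYmeas i u v).comap_le]
  have hind := indep_iSup_of_disjoint hle ((iIndepFun_iff_iIndep _ _ _).1 hindep)
    (disjoint_compl_right (a := S))
  rw [iSup_pair] at hind
  refine hind.indepSet_of_measurableSet hs ?_
  have hmeas (j) (hj : j ∉ S) : Measurable[⨆ k ∈ Sᶜ, m k] (icVars X Y j) :=
    Measurable.of_comap_le (le_iSup₂ (f := fun k (_ : k ∈ Sᶜ) => m k) j hj)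
  have hX (w) (hw : w ≠ u) : Measurable[⨆ k ∈ Sᶜ, m k] (X i w) :=
    hmeas (.inl (i, w)) (by simp [S, hw])
  have hY (w) (hwv : w ≠ v) (hw : w ≠ u) : Measurable[⨆ k ∈ Sᶜ, m k] (Y i w v) :=
    hmeas (.inr (i, ⟨(w, v), hwv⟩)) (by simp [S, hw])
  have hC : activatedAvoiding X Y i u v = X i v ⁻¹' {true} ∪
      ⋃ (w) (_ : w ≠ v ∧ w ≠ u), X i w ⁻¹' {true} ∩ Y i w v ⁻¹' {true} := by
    ext ω
    simp only [activatedAvoiding, mem_ofPred_eq, mem_union, mem_preimage, mem_singleton_iff,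
      mem_iUnion, mem_inter_iff, exists_prop]
    exact or_congr_right (exists_congr fun w => by tauto)
  rw [hC]
  exact (hX v huv.symm (measurableSet_singleton _)).union <| .iUnion fun w => .iUnion fun hw =>
    (hX w hw.2 (measurableSet_singleton _)).inter (hY w hw.1 hw.2 (measurableSet_singleton _))

end Model

theorem ic_edge_probability_closed_form_general
    {V : Type*} [Fintype V]
    {Ω : Type*} [MeasurableSpace Ω] (μ : Measure Ω) [IsProbabilityMeasure μ]
    (t : ℕ) (ht : 0 < t)
    (q : V → ℝ) (p : V → V → ℝ)
    (X : Fin t → V → Ω → Bool) (Y : Fin t → V → V → Ω → Bool)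
    (hXmeas : ∀ i u, Measurable (X i u))
    (hYmeas : ∀ i u v, Measurable (Y i u v))
    (hindep : iIndepFun
      (Sum.elim (fun a : Fin t × V => X a.1 a.2)
        (fun a : Fin t × {a : V × V // a.1 ≠ a.2} => Y a.1 a.2.1.1 a.2.1.2)) μ)
    (hX : ∀ i u, (μ {ω | X i u ω = true}).toReal = q u)
    (hY : ∀ i u v, u ≠ v → (μ {ω | Y i u v ω = true}).toReal = p u v)
    (ap : V → ℝ)
    (hap : ∀ v, ap v = (μ {ω | X ⟨0, ht⟩ v ω = true ∨
        ∃ u, u ≠ v ∧ X ⟨0, ht⟩ u ω = true ∧ Y ⟨0, ht⟩ u v ω = true}).toReal)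
    (apb : V → V → ℝ)
    (hapb : ∀ u v, apb u v =
      (μ ({ω | X ⟨0, ht⟩ v ω = true ∨
          ∃ u', u' ≠ v ∧ X ⟨0, ht⟩ u' ω = true ∧ Y ⟨0, ht⟩ u' v ω = true} ∩
        {ω | X ⟨0, ht⟩ u ω = false})).toReal /
      (μ {ω | X ⟨0, ht⟩ u ω = false}).toReal)
    (u v : V) (huv : u ≠ v)
    (hqu : 0 < q u) (hqu1 : q u < 1) (hapb1 : apb u v < 1) :
    p u v = (ap v - apb u v) / (q u * (1 - apb u v)) := by
  set i : Fin t := ⟨0, ht⟩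
  let mX : MeasurableSpace Ω := .comap (X i u) inferInstance
  let mY : MeasurableSpace Ω := .comap (Y i u v) inferInstance
  have hXu : MeasurableSet[mX ⊔ mY] {ω | X i u ω = true} :=
    le_sup_left (a := mX) _ ⟨{true}, measurableSet_singleton _, rfl⟩
  have hYuv : MeasurableSet[mX ⊔ mY] {ω | Y i u v ω = true} :=
    le_sup_right (a := mX) _ ⟨{true}, measurableSet_singleton _, rfl⟩
  have hXuv : IndepSet {ω | X i u ω = true} {ω | Y i u v ω = true} μ :=
    (indepFun_iff_indepSet_preimage (hXmeas i u) (hYmeas i u v)).1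
      (hindep.indepFun (i := .inl (i, u)) (j := .inr (i, ⟨(u, v), huv⟩)) Sum.inl_ne_inr)
      {true} {true} (measurableSet_singleton _) (measurableSet_singleton _)
  have hcompl : {ω | X i u ω = false} = {ω | X i u ω = true}ᶜ := by
    ext ω; simp
  rw [hapb, setOf_activated_eq_union huv, hcompl] at hapb1 ⊢
  rw [hap, setOf_activated_eq_union huv, ← hX i u, ← hY i u v huv]
  rw [← hX i u] at hqu hqu1
  exact measureReal_eq_div_of_indepSet (hXmeas i u (measurableSet_singleton _))
    (hYmeas i u v (measurableSet_singleton _)) hXuv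
    (indepSet_activatedAvoiding hXmeas hYmeas hindep huv (hXu.inter hYuv))
    (indepSet_activatedAvoiding hXmeas hYmeas hindep huv hXu.compl) hqu hqu1 hapb1

/-- **Closed-form expression for IC edge probabilities.**
In the IC one-step sampling model (seed indicators `X i u` with `P[X i u = 1] = q u`,
edge indicators `Y i u v` for `u ≠ v` with `P[Y i u v = 1] = p u v`, all mutually
independent; node `v` is one-step activated in cascade `i` iff `X i v = 1` or some
`u ≠ v` has `X i u = 1` and `Y i u v = 1`; `ap v = P[B v]` and
`apb u v = P[B v | X u = 0]` for the first cascade), for any distinct `u, v` with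
`0 < q u < 1` and `apb u v < 1`:
`p u v = (ap v − apb u v) / (q u · (1 − apb u v))`. -/
theorem ic_edge_probability_closed_form
    {V : Type*} [Fintype V] [DecidableEq V]
    {Ω : Type*} [MeasurableSpace Ω] (μ : Measure Ω) [IsProbabilityMeasure μ]
    (t : ℕ) (ht : 0 < t)
    (q : V → ℝ) (p : V → V → ℝ)
    (hq : ∀ u, q u ∈ Set.Icc (0 : ℝ) 1)
    (hp : ∀ u v, p u v ∈ Set.Icc (0 : ℝ) 1)
    (hpdiag : ∀ v, p v v = 0)
    (X : Fin t → V → Ω → Bool) (Y : Fin t → V → V → Ω → Bool)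
    (hXmeas : ∀ i u, Measurable (X i u))
    (hYmeas : ∀ i u v, Measurable (Y i u v))
    (hindep : iIndepFun
      (Sum.elim (fun a : Fin t × V => X a.1 a.2)
        (fun a : Fin t × {a : V × V // a.1 ≠ a.2} => Y a.1 a.2.1.1 a.2.1.2)) μ)
    (hX : ∀ i u, (μ {ω | X i u ω = true}).toReal = q u)
    (hY : ∀ i u v, u ≠ v → (μ {ω | Y i u v ω = true}).toReal = p u v)
    (ap : V → ℝ)
    (hap : ∀ v, ap v = (μ {ω | X ⟨0, ht⟩ v ω = true ∨
        ∃ u, u ≠ v ∧ X ⟨0, ht⟩ u ω = true ∧ Y ⟨0, ht⟩ u v ω = true}).toReal)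
    (apb : V → V → ℝ)
    (hapb : ∀ u v, apb u v =
      (μ ({ω | X ⟨0, ht⟩ v ω = true ∨
          ∃ u', u' ≠ v ∧ X ⟨0, ht⟩ u' ω = true ∧ Y ⟨0, ht⟩ u' v ω = true} ∩
        {ω | X ⟨0, ht⟩ u ω = false})).toReal /
      (μ {ω | X ⟨0, ht⟩ u ω = false}).toReal)
    (u v : V) (huv : u ≠ v)
    (hqu : 0 < q u) (hqu1 : q u < 1) (hapb1 : apb u v < 1) :
    p u v = (ap v - apb u v) / (q u * (1 - apb u v)) :=
  ic_edge_probability_closed_form_general μ t ht q p X Y hXmeas hYmeas hindep hX hY ap hap apb hapb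
    u v huv hqu hqu1 hapb1
end

section
/- Fix a seed set S ⊆ V and ε > 0. For any two edge-probability vectors p, p' : E → [0,1] with Σ_{e ∈ E} |p(e) − p'(e)| ≤ ε/n, the IC influence spreads satisfy |σ^p(S) − σ^{p'}(S)| ≤ ε. -/
/-!
The live-edge weights form a product measure on the subsets of `E`, so the expectation of
any statistic `f : Finset α → [0, M]` is Lipschitz in `p`: resampling a single edge `a`
changes the conditional expectation by `(p a - p' a) (f (A ∪ {a}) - f A)`, at most
`M |p a - p' a|`. Summing over the edges one at a time gives `M ∑ₑ |p e - p' e|`, and the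
spread is the expectation of `|R(A, S)| ∈ [0, n]`.
-/

set_option autoImplicit false

/-- IC influence spread via live-edge graphs: for a live-edge set `A ⊆ E`, the set of
nodes reachable from the seed set `S` via edges of `A`, and the influence spread
`σ^p(S) = ∑_{A ⊆ E} (∏_{e ∈ A} p e)(∏_{e ∈ E∖A} (1 − p e)) |R(A,S)|`. -/
noncomputable def icSpread {V : Type*} [Fintype V] [DecidableEq V]
    (E : Finset (V × V)) (p : V × V → ℝ) (S : Finset V) : ℝ :=
  ∑ A ∈ E.powerset,
    ((∏ e ∈ A, p e) * ∏ e ∈ E \ A, (1 - p e)) *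
      (Set.ncard {x : V | ∃ s ∈ S, Relation.ReflTransGen (fun a b => (a, b) ∈ A) s x} : ℝ)

section LiveEdgeWeight

variable {α : Type*} [DecidableEq α]

def liveEdgeWeight (E : Finset α) (p : α → ℝ) (A : Finset α) : ℝ :=
  (∏ e ∈ A, p e) * ∏ e ∈ E \ A, (1 - p e)

theorem sum_liveEdgeWeight (E : Finset α) (p : α → ℝ) :
    ∑ A ∈ E.powerset, liveEdgeWeight E p A = 1 := by
  simp only [liveEdgeWeight, ← Finset.prod_add, add_sub_cancel, Finset.prod_const_one]

theorem liveEdgeWeight_nonneg {E A : Finset α} {p : α → ℝ}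
    (hp : ∀ e ∈ E, p e ∈ Set.Icc (0 : ℝ) 1) (hA : A ⊆ E) :
    0 ≤ liveEdgeWeight E p A := by
  refine mul_nonneg (Finset.prod_nonneg fun e he => (hp e (hA he)).1)
    (Finset.prod_nonneg fun e he => ?_)
  exact sub_nonneg.2 (hp e (Finset.mem_sdiff.1 he).1).2

theorem sum_liveEdgeWeight_insert_mul {s : Finset α} {a : α} (ha : a ∉ s) (p : α → ℝ)
    (f : Finset α → ℝ) :
    ∑ A ∈ (insert a s).powerset, liveEdgeWeight (insert a s) p A * f A =
      ∑ A ∈ s.powerset, liveEdgeWeight s p A * ((1 - p a) * f A + p a * f (insert a A)) := by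
  rw [Finset.sum_powerset_insert ha, ← Finset.sum_add_distrib]
  refine Finset.sum_congr rfl fun A hA => ?_
  have haA : a ∉ A := fun h => ha (Finset.mem_powerset.1 hA h)
  have haSA : a ∉ s \ A := fun h => ha (Finset.mem_sdiff.1 h).1
  rw [liveEdgeWeight, liveEdgeWeight, liveEdgeWeight, Finset.insert_sdiff_of_notMem s haA,
    Finset.insert_sdiff_insert, Finset.sdiff_insert_of_notMem ha, Finset.prod_insert haSA,
    Finset.prod_insert haA]
  ring

theorem abs_sub_sum_liveEdgeWeight_mul_le (E : Finset α) {p p' : α → ℝ}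
    (hp : ∀ e ∈ E, p e ∈ Set.Icc (0 : ℝ) 1) (hp' : ∀ e ∈ E, p' e ∈ Set.Icc (0 : ℝ) 1)
    {M : ℝ} (f : Finset α → ℝ) (hf : ∀ A, f A ∈ Set.Icc 0 M) :
    |∑ A ∈ E.powerset, liveEdgeWeight E p A * f A -
        ∑ A ∈ E.powerset, liveEdgeWeight E p' A * f A| ≤ M * ∑ e ∈ E, |p e - p' e| := by
  induction E using Finset.induction_on generalizing f with
  | empty => simp [liveEdgeWeight]
  | @insert a s ha ih =>
    obtain ⟨hpa, hps⟩ := Finset.forall_mem_insert _ _ _ |>.1 hp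
    obtain ⟨-, hp's⟩ := Finset.forall_mem_insert _ _ _ |>.1 hp'
    set g : (α → ℝ) → Finset α → ℝ := fun q A => (1 - q a) * f A + q a * f (insert a A)
    have hg : ∀ A, g p A ∈ Set.Icc 0 M := fun A => by
      obtain ⟨h0, h1⟩ := hf A
      obtain ⟨h0', h1'⟩ := hf (insert a A)
      constructor <;> nlinarith [hpa.1, hpa.2]
    have hg_sub : ∀ A, |g p A - g p' A| ≤ M * |p a - p' a| := fun A => by
      have hosc : |f (insert a A) - f A| ≤ M := abs_sub_le_of_nonneg_of_le
        (hf _).1 (hf _).2 (hf _).1 (hf _).2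
      calc |g p A - g p' A| = |p a - p' a| * |f (insert a A) - f A| := by
            rw [← abs_mul]; congr 1; simp only [g]; ring
        _ ≤ |p a - p' a| * M := mul_le_mul_of_nonneg_left hosc (abs_nonneg _)
        _ = M * |p a - p' a| := mul_comm _ _
    have hresample : |∑ A ∈ s.powerset, liveEdgeWeight s p' A * (g p A - g p' A)| ≤
        M * |p a - p' a| := calc
      _ ≤ ∑ A ∈ s.powerset, liveEdgeWeight s p' A * (M * |p a - p' a|) := by
        refine (Finset.abs_sum_le_sum_abs _ _).trans (Finset.sum_le_sum fun A hA => ?_)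
        have hw := liveEdgeWeight_nonneg hp's (Finset.mem_powerset.1 hA)
        rw [abs_mul, abs_of_nonneg hw]
        exact mul_le_mul_of_nonneg_left (hg_sub A) hw
      _ = M * |p a - p' a| := by rw [← Finset.sum_mul, sum_liveEdgeWeight, one_mul]
    rw [sum_liveEdgeWeight_insert_mul ha, sum_liveEdgeWeight_insert_mul ha,
      Finset.sum_insert ha]
    calc _ = |(∑ A ∈ s.powerset, liveEdgeWeight s p A * g p A -
              ∑ A ∈ s.powerset, liveEdgeWeight s p' A * g p A) +
            ∑ A ∈ s.powerset, liveEdgeWeight s p' A * (g p A - g p' A)| := by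
          congr 1
          simp only [← Finset.sum_sub_distrib, ← Finset.sum_add_distrib]
          exact Finset.sum_congr rfl fun A _ => by simp only [g]; ring
      _ ≤ M * ∑ e ∈ s, |p e - p' e| + M * |p a - p' a| :=
          (abs_add_le _ _).trans (add_le_add (ih hps hp's _ hg) hresample)
      _ = M * (|p a - p' a| + ∑ e ∈ s, |p e - p' e|) := by ring

end LiveEdgeWeight

/-- **Lipschitz continuity of the IC influence spread in the edge probabilities.**
Fix a seed set `S ⊆ V` and `ε > 0`. For any two edge-probability vectors
`p, p' : E → [0,1]` with `∑_{e ∈ E} |p e − p' e| ≤ ε/n`, where `n = |V|`,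
the IC influence spreads satisfy `|σ^p(S) − σ^{p'}(S)| ≤ ε`. -/
theorem icSpread_close
    {V : Type*} [Fintype V] [DecidableEq V]
    (E : Finset (V × V)) (p p' : V × V → ℝ)
    (hp : ∀ e ∈ E, p e ∈ Set.Icc (0 : ℝ) 1)
    (hp' : ∀ e ∈ E, p' e ∈ Set.Icc (0 : ℝ) 1)
    (S : Finset V) (ε : ℝ) (hε : 0 < ε)
    (hsum : ∑ e ∈ E, |p e - p' e| ≤ ε / (Fintype.card V : ℝ)) :
    |icSpread E p S - icSpread E p' S| ≤ ε := by
  set n : ℝ := (Fintype.card V : ℝ)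
  have hreach : ∀ A : Finset (V × V),
      ((Set.ncard {x : V | ∃ s ∈ S, Relation.ReflTransGen (fun a b => (a, b) ∈ A) s x} : ℕ) : ℝ)
        ∈ Set.Icc 0 n := fun A =>
    ⟨Nat.cast_nonneg _, by
      simpa [n, Nat.card_eq_fintype_card] using Set.ncard_le_card
        {x : V | ∃ s ∈ S, Relation.ReflTransGen (fun a b => (a, b) ∈ A) s x}⟩
  have hn_mul : n * (ε / n) ≤ ε := by
    rcases eq_or_ne n 0 with h0 | h0
    · rw [h0, zero_mul]; exact hε.le
    · rw [mul_div_cancel₀ _ h0]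
  calc |icSpread E p S - icSpread E p' S| ≤ n * ∑ e ∈ E, |p e - p' e| :=
        abs_sub_sum_liveEdgeWeight_mul_le E hp hp' _ hreach
    _ ≤ n * (ε / n) := mul_le_mul_of_nonneg_left hsum (Nat.cast_nonneg _)
    _ ≤ ε := hn_mul
end

section
/- Let V be a finite set, k a positive integer, κ ∈ (0,1] and ε ∈ (0,1). Let σ, σ̂ : 2^V → ℝ be set functions with |σ(S) − σ̂(S)| ≤ εk/2 for every S ⊆ V. Let S* be a set with |S*| ≤ k attaining σ(S*) = max_{|T| ≤ k} σ(T), and suppose σ(S*) ≥ k. If S^A with |S^A| ≤ k satisfies σ̂(S^A) ≥ κ · max_{|T| ≤ k} σ̂(T), then σ(S^A) ≥ (κ − ε) · σ(S*). -/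
set_option autoImplicit false

/-- **Approximation transfer between a true objective and a learned surrogate.**
Let `V` be a finite set, `k` a positive integer, `κ ∈ (0,1]` and `ε ∈ (0,1)`.
Let `σ, σh : 2^V → ℝ` with `|σ S − σh S| ≤ εk/2` for every `S ⊆ V`.
Let `S*` with `|S*| ≤ k` attain `σ S* = max_{|T| ≤ k} σ T`, and suppose `σ S* ≥ k`.
If `S^A` with `|S^A| ≤ k` satisfies `σh S^A ≥ κ · max_{|T| ≤ k} σh T`, then
`σ S^A ≥ (κ − ε) · σ S*`. -/
theorem approx_transfer
    {V : Type*} [Fintype V] [DecidableEq V]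
    (k : ℕ) (hk : 0 < k) (κ ε : ℝ)
    (hκ : κ ∈ Set.Ioc (0 : ℝ) 1) (hε : ε ∈ Set.Ioo (0 : ℝ) 1)
    (σ σh : Finset V → ℝ)
    (hclose : ∀ S : Finset V, |σ S - σh S| ≤ ε * k / 2)
    (Sstar : Finset V) (hSstar_card : Sstar.card ≤ k)
    (hSstar_opt : ∀ T : Finset V, T.card ≤ k → σ T ≤ σ Sstar)
    (hSstar_lb : (k : ℝ) ≤ σ Sstar)
    (SA : Finset V) (hSA_card : SA.card ≤ k)
    (hSA_approx : ∀ T : Finset V, T.card ≤ k → κ * σh T ≤ σh SA) :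
    (κ - ε) * σ Sstar ≤ σ SA := by
  obtain ⟨hκ0, hκ1⟩ := hκ
  obtain ⟨hε0, hε1⟩ := hε
  have h1 := abs_le.mp (hclose SA)
  have h2 := abs_le.mp (hclose Sstar)
  have h3 := hSA_approx Sstar hSstar_card
  nlinarith [mul_le_mul_of_nonneg_left h2.1 hκ0.le,
    mul_le_mul_of_nonneg_right hκ1 (mul_nonneg hε0.le (Nat.cast_nonneg k) : (0:ℝ) ≤ ε * k)]
end

section
/- Let G = (V, E) be a finite directed graph with edge probabilities p : E → [0,1], let R ⊆ V, and define p' : E → [0,1] by p'(u,v) = 1 if v ∈ R and p'(u,v) = p(u,v) otherwise. Then for every S ⊆ V, the IC influence spreads satisfy σ^p(S ∪ R) ≥ σ^{p'}(S). -/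
set_option autoImplicit false

/-- Reachability from `S` via edges of `A ∪ E₁` (where all edges of `E₁` point into `R`)
implies reachability from `S ∪ R` via edges of `A` alone. -/
lemma reach_subset {V : Type*} [DecidableEq V] (A E₁ : Finset (V × V)) (S R : Finset V)
    (hE₁ : ∀ e ∈ E₁, e.2 ∈ R) :
    {x : V | ∃ s ∈ S, Relation.ReflTransGen (fun a b => (a, b) ∈ A ∪ E₁) s x}
      ⊆ {x : V | ∃ s ∈ S ∪ R, Relation.ReflTransGen (fun a b => (a, b) ∈ A) s x} := by
  rintro x ⟨s, hs, h⟩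
  induction h with
  | refl => exact ⟨s, Finset.mem_union_left _ hs, .refl⟩
  | @tail b c h₁ h₂ ih =>
    obtain ⟨t, ht, hchain⟩ := ih
    rcases Finset.mem_union.mp h₂ with h | h
    · exact ⟨t, ht, hchain.tail h⟩
    · exact ⟨c, Finset.mem_union_right _ (hE₁ (b, c) h), .refl⟩

/-- **Seeding `R` dominates raising the probabilities of `R`'s incoming edges to 1.**
Let `G = (V, E)` be a finite directed graph with edge probabilities `p : E → [0,1]`,
let `R ⊆ V`, and define `p'` by `p'(u,v) = 1` if `v ∈ R` and `p'(u,v) = p(u,v)`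
otherwise. Then for every `S ⊆ V`, `σ^p(S ∪ R) ≥ σ^{p'}(S)`. -/
theorem icSpread_seed_dominates
    {V : Type*} [Fintype V] [DecidableEq V]
    (E : Finset (V × V)) (p p' : V × V → ℝ)
    (hp : ∀ e ∈ E, p e ∈ Set.Icc (0 : ℝ) 1)
    (R : Finset V)
    (hp'def : ∀ e : V × V, p' e = if e.2 ∈ R then 1 else p e)
    (S : Finset V) :
    icSpread E p' S ≤ icSpread E p (S ∪ R) := by
  classical
  set E₁ : Finset (V × V) := E.filter (fun e => e.2 ∈ R) with hE₁def
  have hE₁E : E₁ ⊆ E := Finset.filter_subset _ _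
  have hE₁R : ∀ e ∈ E₁, e.2 ∈ R := fun e he => (Finset.mem_filter.mp he).2
  have hp'one : ∀ e ∈ E₁, p' e = 1 := fun e he => by
    rw [hp'def]; simp [hE₁R e he]
  have hp'p : ∀ e ∈ E, e ∉ E₁ → p' e = p e := fun e he hne => by
    rw [hp'def]
    have : e.2 ∉ R := fun h => hne (Finset.mem_filter.mpr ⟨he, h⟩)
    simp [this]
  -- notation for the reach count
  set N : Finset (V × V) → ℝ := fun A =>
    (Set.ncard {x : V | ∃ s ∈ S, Relation.ReflTransGen (fun a b => (a, b) ∈ A) s x} : ℝ)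
    with hN
  -- Step 1: the σ^p(S∪R) sum dominates termwise the sum with reach sets R(A ∪ E₁, S).
  have step1 : ∑ A ∈ E.powerset,
      ((∏ e ∈ A, p e) * ∏ e ∈ E \ A, (1 - p e)) * N (A ∪ E₁)
      ≤ icSpread E p (S ∪ R) := by
    unfold icSpread
    apply Finset.sum_le_sum
    intro A hA
    have hAE : A ⊆ E := Finset.mem_powerset.mp hA
    have hw : 0 ≤ (∏ e ∈ A, p e) * ∏ e ∈ E \ A, (1 - p e) := by
      apply mul_nonneg
      · exact Finset.prod_nonneg fun e he => (hp e (hAE he)).1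
      · refine Finset.prod_nonneg fun e he => ?_
        have := (hp e (Finset.mem_sdiff.mp he).1).2
        linarith
    refine mul_le_mul_of_nonneg_left ?_ hw
    have hsub := reach_subset A E₁ S R hE₁R
    exact_mod_cast Nat.cast_le.mpr (Set.ncard_le_ncard hsub (Set.toFinite _))
  -- Step 2: σ^{p'}(S) is supported on supersets of E₁.
  have step2 : icSpread E p' S =
      ∑ D ∈ E.powerset.filter (fun D => E₁ ⊆ D),
        ((∏ e ∈ D, p' e) * ∏ e ∈ E \ D, (1 - p' e)) * N D := by
    unfold icSpread
    rw [hN]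
    refine (Finset.sum_filter_of_ne ?_).symm
    intro D hD hne
    by_contra hsub
    obtain ⟨e, he₁, heD⟩ := Finset.not_subset.mp hsub
    apply hne
    have heED : e ∈ E \ D := Finset.mem_sdiff.mpr ⟨hE₁E he₁, heD⟩
    have : ∏ e ∈ E \ D, (1 - p' e) = 0 :=
      Finset.prod_eq_zero heED (by rw [hp'one e he₁]; ring)
    rw [this, mul_zero, zero_mul]
  -- Step 3: fiber sums of p-weights equal the p'-weight.
  have key : ∀ D ∈ E.powerset.filter (fun D => E₁ ⊆ D),
      ∑ A ∈ E.powerset.filter (fun A => A ∪ E₁ = D),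
        ((∏ e ∈ A, p e) * ∏ e ∈ E \ A, (1 - p e))
      = (∏ e ∈ D, p' e) * ∏ e ∈ E \ D, (1 - p' e) := by
    intro D hD
    obtain ⟨hDE, hE₁D⟩ := Finset.mem_filter.mp hD
    have hDE' : D ⊆ E := Finset.mem_powerset.mp hDE
    -- reindex the fiber by subsets C of E₁ via C ↦ (D \ E₁) ∪ C
    have hre : ∑ A ∈ E.powerset.filter (fun A => A ∪ E₁ = D),
        ((∏ e ∈ A, p e) * ∏ e ∈ E \ A, (1 - p e))
        = ∑ C ∈ E₁.powerset,
            ((∏ e ∈ (D \ E₁) ∪ C, p e) * ∏ e ∈ E \ ((D \ E₁) ∪ C), (1 - p e)) := by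
      refine (Finset.sum_nbij' (fun C => (D \ E₁) ∪ C) (fun A => A ∩ E₁) ?_ ?_ ?_ ?_ fun C _ => rfl).symm
      · intro C hC
        have hCE₁ : C ⊆ E₁ := Finset.mem_powerset.mp hC
        refine Finset.mem_filter.mpr ⟨Finset.mem_powerset.mpr ?_, ?_⟩
        · exact Finset.union_subset ((Finset.sdiff_subset).trans hDE') (hCE₁.trans hE₁E)
        · rw [Finset.union_assoc, Finset.union_eq_right.mpr hCE₁,
            Finset.sdiff_union_of_subset hE₁D]
      · intro A hA
        exact Finset.mem_powerset.mpr Finset.inter_subset_right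
      · intro C hC
        have hCE₁ : C ⊆ E₁ := Finset.mem_powerset.mp hC
        ext x
        simp only [Finset.mem_inter, Finset.mem_union, Finset.mem_sdiff]
        constructor
        · rintro ⟨h | h, hx⟩
          · exact absurd hx h.2
          · exact h
        · intro hx
          exact ⟨Or.inr hx, hCE₁ hx⟩
      · intro A hA
        obtain ⟨hAE, hAu⟩ := Finset.mem_filter.mp hA
        ext x
        simp only [Finset.mem_union, Finset.mem_sdiff, Finset.mem_inter]
        constructor
        · rintro (⟨hxD, hxE₁⟩ | ⟨hxA, _⟩)
          · have hx' : x ∈ A ∪ E₁ := by rw [hAu]; exact hxD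
            rcases Finset.mem_union.mp hx' with h | h
            · exact h
            · exact absurd h hxE₁
          · exact hxA
        · intro hxA
          by_cases hx : x ∈ E₁
          · exact Or.inr ⟨hxA, hx⟩
          · exact Or.inl ⟨hAu ▸ Finset.mem_union_left _ hxA, hx⟩
    rw [hre]
    -- now compute each summand
    have hdisj : Disjoint (D \ E₁) E₁ := Finset.sdiff_disjoint
    have hterm : ∀ C ∈ E₁.powerset,
        ((∏ e ∈ (D \ E₁) ∪ C, p e) * ∏ e ∈ E \ ((D \ E₁) ∪ C), (1 - p e))
        = ((∏ e ∈ D \ E₁, p e) * ∏ e ∈ E \ D, (1 - p e)) *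
            ((∏ e ∈ C, p e) * ∏ e ∈ E₁ \ C, (1 - p e)) := by
      intro C hC
      have hCE₁ : C ⊆ E₁ := Finset.mem_powerset.mp hC
      have hd1 : Disjoint (D \ E₁) C := hdisj.mono_right hCE₁
      have hsd : E \ ((D \ E₁) ∪ C) = (E \ D) ∪ (E₁ \ C) := by
        ext x
        simp only [Finset.mem_sdiff, Finset.mem_union, not_or, Finset.mem_sdiff]
        constructor
        · rintro ⟨hxE, hnd, hnc⟩
          by_cases hx : x ∈ D
          · have hx₁ : x ∈ E₁ := by
              by_contra h
              exact hnd ⟨hx, h⟩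
            exact Or.inr ⟨hx₁, hnc⟩
          · exact Or.inl ⟨hxE, hx⟩
        · rintro (⟨hxE, hxD⟩ | ⟨hxE₁, hxC⟩)
          · exact ⟨hxE, fun h => hxD h.1, fun h => hxD (hE₁D (hCE₁ h))⟩
          · exact ⟨hE₁E hxE₁, fun h => h.2 hxE₁, hxC⟩
      have hd2 : Disjoint (E \ D) (E₁ \ C) :=
        Finset.disjoint_left.mpr fun x hx hx' =>
          (Finset.mem_sdiff.mp hx).2 (hE₁D (Finset.mem_sdiff.mp hx').1)
      rw [Finset.prod_union hd1, hsd, Finset.prod_union hd2]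
      ring
    rw [Finset.sum_congr rfl hterm, ← Finset.mul_sum]
    have hone : ∑ C ∈ E₁.powerset, ((∏ e ∈ C, p e) * ∏ e ∈ E₁ \ C, (1 - p e)) = 1 := by
      rw [← Finset.prod_add]
      simp
    rw [hone, mul_one]
    -- finally rewrite p' products
    have h1 : ∏ e ∈ D, p' e = ∏ e ∈ D \ E₁, p e := by
      rw [← Finset.prod_sdiff hE₁D]
      rw [Finset.prod_congr rfl hp'one, Finset.prod_const_one, mul_one]
      exact Finset.prod_congr rfl fun e he =>
        hp'p e (hDE' (Finset.mem_sdiff.mp he).1) (Finset.mem_sdiff.mp he).2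
    have h2 : ∏ e ∈ E \ D, (1 - p' e) = ∏ e ∈ E \ D, (1 - p e) := by
      refine Finset.prod_congr rfl fun e he => ?_
      obtain ⟨heE, heD⟩ := Finset.mem_sdiff.mp he
      rw [hp'p e heE (fun h => heD (hE₁D h))]
    rw [h1, h2]
  -- put it together
  have hmaps : ∀ A ∈ E.powerset, A ∪ E₁ ∈ E.powerset.filter (fun D => E₁ ⊆ D) := by
    intro A hA
    exact Finset.mem_filter.mpr ⟨Finset.mem_powerset.mpr
      (Finset.union_subset (Finset.mem_powerset.mp hA) hE₁E), Finset.subset_union_right⟩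
  have hfib := Finset.sum_fiberwise_of_maps_to hmaps
    (fun A => ((∏ e ∈ A, p e) * ∏ e ∈ E \ A, (1 - p e)) * N (A ∪ E₁))
  rw [step2]
  calc ∑ D ∈ E.powerset.filter (fun D => E₁ ⊆ D),
        ((∏ e ∈ D, p' e) * ∏ e ∈ E \ D, (1 - p' e)) * N D
      = ∑ D ∈ E.powerset.filter (fun D => E₁ ⊆ D),
          ∑ A ∈ E.powerset.filter (fun A => A ∪ E₁ = D),
            ((∏ e ∈ A, p e) * ∏ e ∈ E \ A, (1 - p e)) * N (A ∪ E₁) := by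
        refine Finset.sum_congr rfl fun D hD => ?_
        rw [← key D hD, Finset.sum_mul]
        exact Finset.sum_congr rfl fun A hA => by rw [(Finset.mem_filter.mp hA).2]
    _ = ∑ A ∈ E.powerset, ((∏ e ∈ A, p e) * ∏ e ∈ E \ A, (1 - p e)) * N (A ∪ E₁) := hfib
    _ ≤ icSpread E p (S ∪ R) := step1
end

section
/- Let V be a finite set and f : 2^V → ℝ be monotone (f(A) ≤ f(B) whenever A ⊆ B), submodular (f(A ∪ B) + f(A ∩ B) ≤ f(A) + f(B) for all A, B ⊆ V), and satisfy f(∅) ≥ 0. Let T ⊆ V with |T| = m and let 1 ≤ k ≤ m. If S is a uniformly random k-element subset of T, then E[f(S)] ≥ (k/m) · f(T). -/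
set_option autoImplicit false

/-!
Let `F j` be the average of `f` over the `j`-subsets of `T`. Submodularity gives, for every
`(j+1)`-set `S`, that the marginals `f S - f (S \ {x})` sum to at most `f S - f ∅ ≤ f S`; averaging
over all `S` by double counting the pairs `(S \ {x}, x)` yields `F (j+1) / (j+1) ≤ F j / j`.
Chaining these from `k` up to `m`, where `F m = f T`, gives `F m / m ≤ F k / k`.
-/

open Finset
open scoped BigOperators

section

variable {V : Type*} [DecidableEq V]

theorem sub_le_sub_of_submodular {f : Finset V → ℝ}
    (hsub : ∀ A B : Finset V, f (A ∪ B) + f (A ∩ B) ≤ f A + f B)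
    {A B : Finset V} (hAB : A ⊆ B) {x : V} (hx : x ∉ B) :
    f (insert x B) - f B ≤ f (insert x A) - f A := by
  have h := hsub (insert x A) B
  rw [insert_union, union_eq_right.2 hAB, insert_inter_of_notMem hx,
    inter_eq_left.2 hAB] at h
  linarith

theorem sum_sub_erase_le_sub_empty {f : Finset V → ℝ}
    (hsub : ∀ A B : Finset V, f (A ∪ B) + f (A ∩ B) ≤ f A + f B) (S : Finset V) :
    ∑ x ∈ S, (f S - f (S.erase x)) ≤ f S - f ∅ := by
  induction S using Finset.induction_on with
  | empty => simp
  | @insert a s ha ih =>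
    have hmarg : ∀ x ∈ s, f (insert a s) - f ((insert a s).erase x) ≤ f s - f (s.erase x) := by
      intro x hx
      have hxa : x ≠ a := fun h => ha (h ▸ hx)
      rw [erase_insert_of_ne hxa.symm]
      have hdr := sub_le_sub_of_submodular hsub (subset_insert a (s.erase x))
        (x := x) (by simp [hxa])
      rwa [insert_comm, insert_erase hx] at hdr
    calc ∑ x ∈ insert a s, (f (insert a s) - f ((insert a s).erase x))
        = (f (insert a s) - f s) + ∑ x ∈ s, (f (insert a s) - f ((insert a s).erase x)) := by
          rw [sum_insert ha, erase_insert ha]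
      _ ≤ (f (insert a s) - f s) + (f s - f ∅) := by
          gcongr
          exact (sum_le_sum hmarg).trans ih
      _ = f (insert a s) - f ∅ := by ring

theorem sum_powersetCard_succ_sum_erase {M : Type*} [AddCommMonoid M] (g : Finset V → M)
    (T : Finset V) (j : ℕ) :
    ∑ S ∈ T.powersetCard (j + 1), ∑ x ∈ S, g (S.erase x)
      = ∑ A ∈ T.powersetCard j, #(T \ A) • g A := by
  simp_rw [← sum_const]
  rw [sum_sigma', sum_sigma']
  refine sum_nbij' (fun p => ⟨p.1.erase p.2, p.2⟩) (fun q => ⟨insert q.2 q.1, q.2⟩)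
    ?_ ?_ ?_ ?_ (fun _ _ => rfl)
  · rintro ⟨S, x⟩ hp
    simp only [mem_sigma, mem_powersetCard] at hp ⊢
    obtain ⟨⟨hST, hcard⟩, hx⟩ := hp
    refine ⟨⟨(erase_subset _ _).trans hST, ?_⟩, mem_sdiff.2 ⟨hST hx, notMem_erase _ _⟩⟩
    rw [card_erase_of_mem hx, hcard, Nat.add_sub_cancel]
  · rintro ⟨A, x⟩ hq
    simp only [mem_sigma, mem_powersetCard, mem_sdiff] at hq ⊢
    obtain ⟨⟨hAT, hcard⟩, hxT, hxA⟩ := hq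
    exact ⟨⟨insert_subset hxT hAT, by rw [card_insert_of_notMem hxA, hcard]⟩, mem_insert_self _ _⟩
  · rintro ⟨S, x⟩ hp
    simp only [mem_sigma] at hp
    simp [insert_erase hp.2]
  · rintro ⟨A, x⟩ hq
    simp only [mem_sigma, mem_sdiff] at hq
    simp [erase_insert hq.2.2]

theorem mul_sum_powersetCard_succ_le {f : Finset V → ℝ}
    (hsub : ∀ A B : Finset V, f (A ∪ B) + f (A ∩ B) ≤ f A + f B) (h0 : 0 ≤ f ∅)
    (T : Finset V) (j : ℕ) :
    j * ∑ S ∈ T.powersetCard (j + 1), f S ≤ (#T - j : ℕ) * ∑ A ∈ T.powersetCard j, f A := by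
  have hS : ∀ S ∈ T.powersetCard (j + 1), j * f S ≤ ∑ x ∈ S, f (S.erase x) := by
    intro S hS
    have hmarg := sum_sub_erase_le_sub_empty hsub S
    rw [sum_sub_distrib, sum_const, (mem_powersetCard.1 hS).2, nsmul_eq_mul] at hmarg
    push_cast at hmarg
    linarith
  calc j * ∑ S ∈ T.powersetCard (j + 1), f S
      ≤ ∑ S ∈ T.powersetCard (j + 1), ∑ x ∈ S, f (S.erase x) := by
        rw [mul_sum]
        exact sum_le_sum hS
    _ = ∑ A ∈ T.powersetCard j, #(T \ A) • f A := sum_powersetCard_succ_sum_erase f T j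
    _ = (#T - j : ℕ) * ∑ A ∈ T.powersetCard j, f A := by
        rw [mul_sum]
        refine sum_congr rfl fun A hA => ?_
        obtain ⟨hAT, hcard⟩ := mem_powersetCard.1 hA
        rw [card_sdiff_of_subset hAT, hcard, nsmul_eq_mul]

theorem expect_powersetCard_succ_div_le {f : Finset V → ℝ}
    (hsub : ∀ A B : Finset V, f (A ∪ B) + f (A ∩ B) ≤ f A + f B) (h0 : 0 ≤ f ∅)
    (T : Finset V) {j : ℕ} (hj : 0 < j) (hjT : j < #T) :
    (𝔼 S ∈ T.powersetCard (j + 1), f S) / (j + 1 : ℕ) ≤ (𝔼 S ∈ T.powersetCard j, f S) / j := by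
  have hchoose : 0 < (#T).choose j := Nat.choose_pos hjT.le
  have hcomp : 0 < #T - j := Nat.sub_pos_of_lt hjT
  simp only [expect_eq_sum_div_card, card_powersetCard, div_div]
  rw [← Nat.cast_mul, Nat.choose_succ_right_eq, div_le_div_iff₀ (by positivity) (by positivity)]
  push_cast
  have hstep := mul_le_mul_of_nonneg_left (mul_sum_powersetCard_succ_le hsub h0 T j)
    (Nat.cast_nonneg (α := ℝ) ((#T).choose j))
  linarith

theorem expect_powersetCard_div_le_of_le {f : Finset V → ℝ}
    (hsub : ∀ A B : Finset V, f (A ∪ B) + f (A ∩ B) ≤ f A + f B) (h0 : 0 ≤ f ∅)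
    (T : Finset V) {k j : ℕ} (hk : 0 < k) (hkj : k ≤ j) (hjT : j ≤ #T) :
    (𝔼 S ∈ T.powersetCard j, f S) / j ≤ (𝔼 S ∈ T.powersetCard k, f S) / k := by
  induction j, hkj using Nat.le_induction with
  | base => rfl
  | succ j hkj ih =>
    exact (expect_powersetCard_succ_div_le hsub h0 T (hk.trans_le hkj) hjT).trans
      (ih (Nat.le_of_succ_le hjT))

end

theorem random_subset_submodular_general
    {V : Type*} [DecidableEq V]
    (f : Finset V → ℝ)
    (hsub : ∀ A B : Finset V, f (A ∪ B) + f (A ∩ B) ≤ f A + f B)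
    (h0 : 0 ≤ f ∅)
    (T : Finset V) (m k : ℕ) (hm : T.card = m) (hk1 : 1 ≤ k) (hkm : k ≤ m) :
    ((k : ℝ) / m) * f T
      ≤ (∑ S ∈ T.powersetCard k, f S) / ((T.powersetCard k).card : ℝ) := by
  subst hm
  have hchain := expect_powersetCard_div_le_of_le hsub h0 T hk1 hkm le_rfl
  rw [powersetCard_self, expect_singleton] at hchain
  rw [← expect_eq_sum_div_card]
  calc (k : ℝ) / #T * f T = k * (f T / #T) := by ring
    _ ≤ k * ((𝔼 S ∈ T.powersetCard k, f S) / k) := by gcongr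
    _ = 𝔼 S ∈ T.powersetCard k, f S := mul_div_cancel₀ _ (by positivity)

/-- **Random subsets of monotone submodular functions.**
Let `f : 2^V → ℝ` be monotone, submodular, with `f ∅ ≥ 0`. Let `T ⊆ V` with `|T| = m`
and `1 ≤ k ≤ m`. If `S` is a uniformly random `k`-element subset of `T`, then
`E[f(S)] ≥ (k/m) · f(T)`. -/
theorem random_subset_submodular
    {V : Type*} [DecidableEq V]
    (f : Finset V → ℝ)
    (hmono : ∀ A B : Finset V, A ⊆ B → f A ≤ f B)
    (hsub : ∀ A B : Finset V, f (A ∪ B) + f (A ∩ B) ≤ f A + f B)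
    (h0 : 0 ≤ f ∅)
    (T : Finset V) (m k : ℕ) (hm : T.card = m) (hk1 : 1 ≤ k) (hkm : k ≤ m) :
    ((k : ℝ) / m) * f T
      ≤ (∑ S ∈ T.powersetCard k, f S) / ((T.powersetCard k).card : ℝ) :=
  random_subset_submodular_general f hsub h0 T m k hm hk1 hkm
end

section
/- In the LT one-step sampling model with t = 1, for every node v ∈ V the one-step activation probability satisfies ap(v) = q(v) + (1 − q(v)) · Σ_{u ∈ V, u ≠ v} q(u) · w(u,v). -/
/-!
Outside the null event `r > 1`, a node `v` is activated in one step exactly when its threshold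
`r` is at most the level `X v + (1 - X v) * ∑_{u ≠ v} w u v * X u`, a function of the seed
indicators with values in `[0, 1]`. Since `r` is uniform on `[0, 1]` and independent of the
seeds, the activation probability is the expectation of this level, which linearity and the
independence of `X v` from each `X u` evaluate to `q v + (1 - q v) * ∑_{u ≠ v} q u * w u v`.
-/

open MeasureTheory ProbabilityTheory Finset

section

variable {Ω : Type*} [MeasurableSpace Ω] {μ : Measure Ω}

lemma ProbabilityTheory.iIndepFun.indepFun_sumElim {ι κ β : Type*} [Fintype ι] [Fintype κ]
    [MeasurableSpace β] {f : ι → Ω → β} {g : κ → Ω → β} (h : iIndepFun (Sum.elim f g) μ)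
    (hf : ∀ i, Measurable (f i)) (hg : ∀ j, Measurable (g j)) :
    IndepFun (fun ω i ↦ f i ω) (fun ω j ↦ g j ω) μ := by
  have hST : Disjoint (univ.map .inl) (univ.map (.inr : κ ↪ ι ⊕ κ)) := by
    simp [disjoint_left]
  exact (h.indepFun_finset _ _ hST (Sum.forall.2 ⟨hf, hg⟩)).comp
    (φ := fun y i ↦ y ⟨.inl i, by simp⟩) (ψ := fun y j ↦ y ⟨.inr j, by simp⟩)
    (measurable_pi_lambda _ fun _ ↦ measurable_pi_apply _)
    (measurable_pi_lambda _ fun _ ↦ measurable_pi_apply _)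

lemma integral_eq_measureReal_of_zero_or_one {X : Ω → ℝ} (hX : Measurable X)
    (h01 : ∀ ω, X ω = 0 ∨ X ω = 1) : ∫ ω, X ω ∂μ = μ.real {ω | X ω = 1} := by
  have hind : ∀ ω, X ω = {ω | X ω = 1}.indicator 1 ω := fun ω ↦ by
    rcases h01 ω with h | h <;> simp [h]
  rw [integral_congr_ae (ae_of_all _ hind)]
  exact integral_indicator_one (hX (measurableSet_singleton 1))

lemma ae_mem_Icc_of_map_eq_uniform {U : Ω → ℝ} (hU : Measurable U)
    (hUμ : μ.map U = volume.restrict (Set.Icc 0 1)) : ∀ᵐ ω ∂μ, U ω ∈ Set.Icc (0 : ℝ) 1 :=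
  ae_of_ae_map hU.aemeasurable (hUμ ▸ ae_restrict_mem measurableSet_Icc)

lemma Real.volume_restrict_Icc_zero_one_Iic {t : ℝ} (ht : t ∈ Set.Icc (0 : ℝ) 1) :
    volume.restrict (Set.Icc (0 : ℝ) 1) (Set.Iic t) = ENNReal.ofReal t := by
  have hinter : Set.Iic t ∩ Set.Icc 0 1 = Set.Icc 0 t := by
    ext x
    simp only [Set.mem_inter_iff, Set.mem_Iic, Set.mem_Icc]
    exact ⟨fun h ↦ ⟨h.2.1, h.1⟩, fun h ↦ ⟨h.2, h.1, h.2.trans ht.2⟩⟩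
  rw [Measure.restrict_apply measurableSet_Iic, hinter, Real.volume_Icc, sub_zero]

lemma measureReal_le_eq_integral_of_indepFun [IsProbabilityMeasure μ] {T U : Ω → ℝ}
    (hT : Measurable T) (hU : Measurable U) (hTU : IndepFun T U μ)
    (hUμ : μ.map U = volume.restrict (Set.Icc 0 1)) (hT01 : ∀ ω, T ω ∈ Set.Icc (0 : ℝ) 1) :
    μ.real {ω | U ω ≤ T ω} = ∫ ω, T ω ∂μ := by
  have hset : MeasurableSet {p : ℝ × ℝ | p.2 ≤ p.1} :=
    measurableSet_le measurable_snd measurable_fst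
  have hmono : Measurable fun t : ℝ ↦ volume.restrict (Set.Icc (0 : ℝ) 1) (Set.Iic t) :=
    Monotone.measurable fun a b hab ↦ measure_mono (Set.Iic_subset_Iic.mpr hab)
  have hprod : μ.map (fun ω ↦ (T ω, U ω)) = (μ.map T).prod (μ.map U) :=
    (indepFun_iff_map_prod_eq_prod_map_map hT.aemeasurable hU.aemeasurable).mp hTU
  have hlintegral : μ {ω | U ω ≤ T ω} = ∫⁻ ω, ENNReal.ofReal (T ω) ∂μ := by
    calc μ {ω | U ω ≤ T ω} = μ.map (fun ω ↦ (T ω, U ω)) {p | p.2 ≤ p.1} := by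
          rw [Measure.map_apply (hT.prodMk hU) hset]; rfl
      _ = ∫⁻ t, volume.restrict (Set.Icc (0 : ℝ) 1) (Set.Iic t) ∂μ.map T := by
          rw [hprod, hUμ, Measure.prod_apply hset]; rfl
      _ = ∫⁻ ω, ENNReal.ofReal (T ω) ∂μ := by
          rw [lintegral_map hmono hT]
          exact lintegral_congr fun ω ↦ Real.volume_restrict_Icc_zero_one_Iic (hT01 ω)
  rw [measureReal_def, hlintegral,
    integral_eq_lintegral_of_nonneg_ae (ae_of_all _ fun ω ↦ (hT01 ω).1) hT.aestronglyMeasurable]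

section ActivationLevel

variable {V : Type*} [Fintype V] [DecidableEq V]

def activationLevel (w : V → V → ℝ) (v : V) (x : V → ℝ) : ℝ :=
  x v + (1 - x v) * ∑ u ∈ univ.erase v, w u v * x u

lemma measurable_activationLevel (w : V → V → ℝ) (v : V) : Measurable (activationLevel w v) := by
  unfold activationLevel; fun_prop

lemma activationLevel_mem_Icc {w : V → V → ℝ} {v : V} {x : V → ℝ}
    (hw : ∀ u, 0 ≤ w u v) (hwnorm : ∑ u, w u v ≤ 1) (hx : ∀ u, x u ∈ Set.Icc (0 : ℝ) 1) :
    activationLevel w v x ∈ Set.Icc (0 : ℝ) 1 := by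
  set S := ∑ u ∈ univ.erase v, w u v * x u
  have hS0 : 0 ≤ S := sum_nonneg fun u _ ↦ mul_nonneg (hw u) (hx u).1
  have hS1 : S ≤ 1 := calc
    S ≤ ∑ u ∈ univ.erase v, w u v := sum_le_sum fun u _ ↦ mul_le_of_le_one_right (hw u) (hx u).2
    _ ≤ ∑ u, w u v := sum_le_univ_sum_of_nonneg hw
    _ ≤ 1 := hwnorm
  obtain ⟨hxv0, hxv1⟩ := hx v
  constructor <;> unfold activationLevel <;> nlinarith

lemma le_activationLevel_iff {w : V → V → ℝ} {v : V} {x : V → ℝ} {s : ℝ}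
    (hxv : x v = 0 ∨ x v = 1) (hs : s ≤ 1) :
    s ≤ activationLevel w v x ↔ x v = 1 ∨ s ≤ ∑ u ∈ univ.erase v, w u v * x u := by
  rcases hxv with h | h <;> simp [activationLevel, h, hs]

lemma integral_activationLevel [IsProbabilityMeasure μ] (w : V → V → ℝ) (v : V) {Y : V → Ω → ℝ}
    (hYint : ∀ u, Integrable (Y u) μ) (hindep : ∀ u ≠ v, IndepFun (Y v) (Y u) μ) :
    ∫ ω, activationLevel w v (fun u ↦ Y u ω) ∂μ =
      μ[Y v] + (1 - μ[Y v]) * ∑ u ∈ univ.erase v, μ[Y u] * w u v := by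
  have hcompl : Integrable (fun ω ↦ 1 - Y v ω) μ := (integrable_const 1).sub (hYint v)
  have hcompl_indep : ∀ u ∈ univ.erase v, IndepFun (fun ω ↦ 1 - Y v ω) (Y u) μ := fun u hu ↦
    (hindep u (ne_of_mem_erase hu)).comp (φ := fun y ↦ 1 - y) (by fun_prop) measurable_id
  have hterm : ∀ u ∈ univ.erase v,
      ∫ ω, w u v * ((1 - Y v ω) * Y u ω) ∂μ = w u v * ((1 - μ[Y v]) * μ[Y u]) := by
    intro u hu
    rw [integral_const_mul, (hcompl_indep u hu).integral_fun_mul_eq_mul_integral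
      hcompl.aestronglyMeasurable (hYint u).aestronglyMeasurable,
      integral_sub (integrable_const 1) (hYint v), integral_const]
    simp
  calc ∫ ω, activationLevel w v (fun u ↦ Y u ω) ∂μ
      = ∫ ω, (Y v ω + ∑ u ∈ univ.erase v, w u v * ((1 - Y v ω) * Y u ω)) ∂μ := by
        congr 1; funext ω
        simp only [activationLevel, mul_sum]
        congr 1; exact sum_congr rfl fun u _ ↦ by ring
    _ = μ[Y v] + ∑ u ∈ univ.erase v, w u v * ((1 - μ[Y v]) * μ[Y u]) := by
        rw [integral_add (hYint v) (integrable_finsetSum _ fun u hu ↦ ?_),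
          integral_finsetSum _ fun u hu ↦ ?_, sum_congr rfl hterm]
        all_goals exact ((hcompl_indep u hu).integrable_mul hcompl (hYint u)).const_mul _
    _ = _ := by rw [mul_sum]; exact congrArg _ (sum_congr rfl fun u _ ↦ by ring)

end ActivationLevel

end

theorem lt_ap_eq_general
    {V : Type*} [Fintype V] [DecidableEq V]
    {Ω : Type*} [MeasurableSpace Ω] (μ : Measure Ω) [IsProbabilityMeasure μ]
    (q : V → ℝ) (w : V → V → ℝ)
    (hw : ∀ u v, w u v ∈ Set.Icc (0 : ℝ) 1)
    (hwnorm : ∀ v, ∑ u, w u v ≤ 1)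
    (X : Fin 1 → V → Ω → ℝ) (r : Fin 1 → V → Ω → ℝ)
    (hXmeas : ∀ i u, Measurable (X i u))
    (hrmeas : ∀ i v, Measurable (r i v))
    (hX01 : ∀ i u ω, X i u ω = 0 ∨ X i u ω = 1)
    (hindep : iIndepFun (m := fun _ : (Fin 1 × V) ⊕ (Fin 1 × V) =>
        (inferInstance : MeasurableSpace ℝ))
      (Sum.elim (fun a => X a.1 a.2) (fun a => r a.1 a.2)) μ)
    (hX : ∀ i u, (μ {ω | X i u ω = 1}).toReal = q u)
    (hr : ∀ i v, Measure.map (r i v) μ = (volume : Measure ℝ).restrict (Set.Icc 0 1))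
    (ap : V → ℝ)
    (hap : ∀ v, ap v = (μ {ω | X 0 v ω = 1 ∨
        r 0 v ω ≤ ∑ u ∈ Finset.univ.erase v, w u v * X 0 u ω}).toReal) :
    ∀ v, ap v = q v + (1 - q v) * ∑ u ∈ Finset.univ.erase v, q u * w u v := by
  intro v
  have hXIcc : ∀ u ω, X 0 u ω ∈ Set.Icc (0 : ℝ) 1 := fun u ω ↦ by
    rcases hX01 0 u ω with h | h <;> simp [h]
  set T : Ω → ℝ := fun ω ↦ activationLevel w v (fun u ↦ X 0 u ω)
  have hTmeas : Measurable T := (measurable_activationLevel w v).comp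
    (measurable_pi_lambda _ (hXmeas 0))
  have hT01 : ∀ ω, T ω ∈ Set.Icc (0 : ℝ) 1 := fun ω ↦
    activationLevel_mem_Icc (fun u ↦ (hw u v).1) (hwnorm v) fun u ↦ hXIcc u ω
  have hTr : IndepFun T (r 0 v) μ :=
    (hindep.indepFun_sumElim (fun a ↦ hXmeas a.1 a.2) (fun a ↦ hrmeas a.1 a.2)).comp
      ((measurable_activationLevel w v).comp (measurable_pi_lambda _ fun u ↦
        measurable_pi_apply (0, u))) (measurable_pi_apply (0, v))
  have hevent : {ω | X 0 v ω = 1 ∨ r 0 v ω ≤ ∑ u ∈ univ.erase v, w u v * X 0 u ω}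
      =ᵐ[μ] {ω | r 0 v ω ≤ T ω} := by
    filter_upwards [ae_mem_Icc_of_map_eq_uniform (hrmeas 0 v) (hr 0 v)] with ω hω
    exact propext (le_activationLevel_iff (x := fun u ↦ X 0 u ω) (hX01 0 v ω) hω.2).symm
  have hmean : ∀ u, μ[X 0 u] = q u := fun u ↦
    (integral_eq_measureReal_of_zero_or_one (hXmeas 0 u) (hX01 0 u)).trans (hX 0 u)
  calc ap v = μ.real {ω | r 0 v ω ≤ T ω} := by rw [hap v, measure_congr hevent]; rfl
    _ = ∫ ω, T ω ∂μ :=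
      measureReal_le_eq_integral_of_indepFun hTmeas (hrmeas 0 v) hTr (hr 0 v) hT01
    _ = q v + (1 - q v) * ∑ u ∈ univ.erase v, q u * w u v := by
      rw [integral_activationLevel w v (fun u ↦ ?_) fun u hu ↦ ?_]
      · simp only [hmean]
      · exact Integrable.of_mem_Icc 0 1 (hXmeas 0 u).aemeasurable (ae_of_all _ (hXIcc u))
      · exact hindep.indepFun (i := .inl (0, v)) (j := .inl (0, u)) (by simpa using hu.symm)

/-- **One-step activation probability under the LT model.**
In the LT one-step sampling model with `t = 1` (seed indicators `X 0 u ∈ {0,1}` with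
`P[X 0 u = 1] = q u`, thresholds `r 0 v` uniform on `[0,1]`, all mutually independent;
node `v` is one-step activated iff `X 0 v = 1` or `∑_{u ≠ v} w u v · X 0 u ≥ r 0 v`),
for every node `v`, `ap v = q v + (1 − q v) · ∑_{u ≠ v} q u · w u v`. -/
theorem lt_ap_eq
    {V : Type*} [Fintype V] [DecidableEq V]
    {Ω : Type*} [MeasurableSpace Ω] (μ : Measure Ω) [IsProbabilityMeasure μ]
    (q : V → ℝ) (w : V → V → ℝ)
    (hq : ∀ u, q u ∈ Set.Icc (0 : ℝ) 1)
    (hw : ∀ u v, w u v ∈ Set.Icc (0 : ℝ) 1)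
    (hwdiag : ∀ v, w v v = 0)
    (hwnorm : ∀ v, ∑ u, w u v ≤ 1)
    (X : Fin 1 → V → Ω → ℝ) (r : Fin 1 → V → Ω → ℝ)
    (hXmeas : ∀ i u, Measurable (X i u))
    (hrmeas : ∀ i v, Measurable (r i v))
    (hX01 : ∀ i u ω, X i u ω = 0 ∨ X i u ω = 1)
    (hindep : iIndepFun (m := fun _ : (Fin 1 × V) ⊕ (Fin 1 × V) =>
        (inferInstance : MeasurableSpace ℝ))
      (Sum.elim (fun a => X a.1 a.2) (fun a => r a.1 a.2)) μ)
    (hX : ∀ i u, (μ {ω | X i u ω = 1}).toReal = q u)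
    (hr : ∀ i v, Measure.map (r i v) μ = (volume : Measure ℝ).restrict (Set.Icc 0 1))
    (ap : V → ℝ)
    (hap : ∀ v, ap v = (μ {ω | X 0 v ω = 1 ∨
        r 0 v ω ≤ ∑ u ∈ Finset.univ.erase v, w u v * X 0 u ω}).toReal) :
    ∀ v, ap v = q v + (1 - q v) * ∑ u ∈ Finset.univ.erase v, q u * w u v :=
  lt_ap_eq_general μ q w hw hwnorm X r hXmeas hrmeas hX01 hindep hX hr ap hap
end

section
/- In the LT one-step sampling model, for any two distinct nodes u, v ∈ V with 0 < q(u) < 1 and q(v) < 1, the edge weight satisfies w(u,v) = (ap(v) − ap(v|ū)) / (q(u) · (1 − q(v))). -/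
set_option autoImplicit false

open MeasureTheory ProbabilityTheory

/-!
Condition on the seed vector `(X a)_a` of the first cascade. The threshold of `v` is uniform on
`[0,1]` and independent of the seeds, so `r ≤ ∑ c a * X a` has conditional probability
`∑ c a * X a`. Together with the mutual independence of the seeds this gives, for every set `s` of
nodes with `v ∉ s`,
`P[B v, X = 0 on s] = ∏_{a ∈ s} (1 - q a) * (q v + (1 - q v) * ∑_{a ∉ s ∪ {v}} w a v * q a)`.
For `s = ∅` and `s = {u}` the two sums differ only in the term `a = u`, whence
`ap v - ap(v|ū) = (1 - q v) * w u v * q u`.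
-/

theorem ProbabilityTheory.iIndepFun.indepFun_pi_comp {ι κ Ω β : Type*} [Fintype κ]
    [MeasurableSpace Ω] [MeasurableSpace β] {μ : Measure Ω} {f : ι → Ω → β}
    (hf : iIndepFun f μ) (hmeas : ∀ i, Measurable (f i)) {e : κ → ι}
    {j : ι} (hj : ∀ k, e k ≠ j) :
    IndepFun (fun ω k => f (e k) ω) (f j) μ := by
  classical
  have hdisj : Disjoint (Finset.univ.image e) {j} := by
    simpa [Finset.disjoint_singleton_right] using hj
  have hφ : Measurable fun (x : Finset.univ.image e → β) k => x ⟨e k, by simp⟩ := by fun_prop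
  have hψ : Measurable fun (x : ({j} : Finset ι) → β) => x ⟨j, Finset.mem_singleton_self j⟩ :=
    measurable_pi_apply _
  exact (hf.indepFun_finset _ _ hdisj hmeas).comp hφ hψ

theorem eq_indicator_of_eq_zero_or_eq_one {α : Type*} {f : α → ℝ}
    (hf : ∀ x, f x = 0 ∨ f x = 1) :
    f = {x | f x = 1}.indicator 1 := by
  ext x
  rcases hf x with h | h <;> simp [h]

theorem measureReal_preimage_inter_le_of_indepFun_uniform
    {Ω β : Type*} [MeasurableSpace Ω] [MeasurableSpace β] {μ : Measure Ω} [IsFiniteMeasure μ]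
    {Y : Ω → β} {R : Ω → ℝ} (hY : Measurable Y) (hR : Measurable R) (hYR : IndepFun Y R μ)
    (hRunif : μ.map R = volume.restrict (Set.Icc 0 1)) {g : β → ℝ} (hg : Measurable g)
    (hg0 : ∀ ω, 0 ≤ g (Y ω)) (hg1 : ∀ ω, g (Y ω) ≤ 1) {A : Set β} (hA : MeasurableSet A) :
    μ.real (Y ⁻¹' A ∩ {ω | R ω ≤ g (Y ω)}) = ∫ ω in Y ⁻¹' A, g (Y ω) ∂μ := by
  set E : Set (β × ℝ) := {p | p.1 ∈ A ∧ p.2 ≤ g p.1}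
  have hE : MeasurableSet E :=
    (hA.preimage measurable_fst).inter (measurableSet_le measurable_snd (hg.comp measurable_fst))
  have hslice : ∀ ω, volume.restrict (Set.Icc (0 : ℝ) 1) (Prod.mk (Y ω) ⁻¹' E) =
      (Y ⁻¹' A).indicator (fun ω => ENNReal.ofReal (g (Y ω))) ω := by
    intro ω
    by_cases hω : Y ω ∈ A
    · have hIcc : Prod.mk (Y ω) ⁻¹' E ∩ Set.Icc 0 1 = Set.Icc 0 (g (Y ω)) := by
        ext x
        simp only [E, Set.mem_inter_iff, Set.mem_preimage, Set.mem_Icc]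
        constructor
        · rintro ⟨⟨-, hx⟩, hx0, -⟩; exact ⟨hx0, hx⟩
        · rintro ⟨hx0, hx⟩; exact ⟨⟨hω, hx⟩, hx0, hx.trans (hg1 ω)⟩
      rw [Measure.restrict_apply (measurable_prodMk_left hE), hIcc, Real.volume_Icc, sub_zero,
        Set.indicator_of_mem (Set.mem_preimage.2 hω)]
    · have hempty : Prod.mk (Y ω) ⁻¹' E = ∅ := by ext x; simp [E, hω]
      rw [hempty, measure_empty, Set.indicator_of_notMem (by simpa using hω)]
  have hmap : μ.map (fun ω => (Y ω, R ω)) = (μ.map Y).prod (μ.map R) :=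
    (indepFun_iff_map_prod_eq_prod_map_map hY.aemeasurable hR.aemeasurable).1 hYR
  have hlint : μ (Y ⁻¹' A ∩ {ω | R ω ≤ g (Y ω)}) =
      ∫⁻ ω in Y ⁻¹' A, ENNReal.ofReal (g (Y ω)) ∂μ := by
    calc μ (Y ⁻¹' A ∩ {ω | R ω ≤ g (Y ω)}) = μ.map (fun ω => (Y ω, R ω)) E :=
          (Measure.map_apply (hY.prodMk hR) hE).symm
      _ = ∫⁻ ω, (Y ⁻¹' A).indicator (fun ω => ENNReal.ofReal (g (Y ω))) ω ∂μ := by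
          rw [hmap, hRunif, Measure.prod_apply hE,
            lintegral_map (measurable_measure_prodMk_left hE) hY]
          exact lintegral_congr hslice
      _ = _ := lintegral_indicator (hY hA) _
  rw [measureReal_def, hlint, integral_eq_lintegral_of_nonneg_ae (.of_forall hg0)
    (hg.comp hY).aestronglyMeasurable]

theorem measurableSet_forall_mem_eq {ι α β : Type*} [MeasurableSpace α] [MeasurableSpace β]
    [MeasurableSingletonClass β] {f : ι → α → β} (hf : ∀ i, Measurable (f i)) (t : Finset ι)
    (b : β) : MeasurableSet {x | ∀ i ∈ t, f i x = b} := by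
  have h : {x | ∀ i ∈ t, f i x = b} = ⋂ i ∈ t, f i ⁻¹' {b} := by ext; simp
  exact h ▸ t.measurableSet_biInter fun i _ => hf i (measurableSet_singleton b)

section OneStep

variable {V Ω : Type*} [MeasurableSpace Ω] {μ : Measure Ω} {X : V → Ω → ℝ}

theorem setIntegral_sum_mul_of_eq_zero_or_eq_one [IsFiniteMeasure μ] (hX : ∀ a, Measurable (X a))
    (hX01 : ∀ a ω, X a ω = 0 ∨ X a ω = 1) (N : Finset V) (c : V → ℝ) (S : Set Ω) :
    ∫ ω in S, ∑ a ∈ N, c a * X a ω ∂μ = ∑ a ∈ N, c a * μ.real (S ∩ {ω | X a ω = 1}) := by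
  have hmeas : ∀ a, MeasurableSet {ω | X a ω = 1} := fun a => hX a (measurableSet_singleton 1)
  have hint : ∀ a ∈ N, Integrable (fun ω => c a * X a ω) (μ.restrict S) := fun a _ => by
    rw [eq_indicator_of_eq_zero_or_eq_one (hX01 a)]
    exact ((integrable_const 1).indicator (hmeas a)).const_mul (c a)
  rw [integral_finsetSum N hint]
  refine Finset.sum_congr rfl fun a _ => ?_
  have hXa : ∫ ω in S, X a ω ∂μ = ∫ ω in S, {ω | X a ω = 1}.indicator 1 ω ∂μ :=
    congrArg _ (eq_indicator_of_eq_zero_or_eq_one (hX01 a))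
  rw [integral_const_mul, hXa, integral_indicator_one (hmeas a),
    measureReal_restrict_apply (hmeas a), Set.inter_comm]

variable [IsProbabilityMeasure μ] {q : V → ℝ} (hX : ∀ a, Measurable (X a))
  (hX01 : ∀ a ω, X a ω = 0 ∨ X a ω = 1) (hq : ∀ a, μ.real {ω | X a ω = 1} = q a)
include hX hX01 hq

theorem measureReal_eq_zero_eq_one_sub (a : V) : μ.real {ω | X a ω = 0} = 1 - q a := by
  have hcompl : {ω | X a ω = 0} = {ω | X a ω = 1}ᶜ := by
    ext ω
    rcases hX01 a ω with h | h <;> simp [h]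
  have hmeas : MeasurableSet {ω | X a ω = 1} := hX a (measurableSet_singleton 1)
  rw [hcompl, probReal_compl_eq_one_sub hmeas, hq]

theorem measureReal_forall_eq_zero_inter_eq_one [DecidableEq V] (hXind : iIndepFun X μ)
    {s : Finset V} {b : V} (hb : b ∉ s) :
    μ.real ({ω | ∀ a ∈ s, X a ω = 0} ∩ {ω | X b ω = 1}) = (∏ a ∈ s, (1 - q a)) * q b := by
  set sets : V → Set ℝ := fun a => if a = b then {1} else {0}
  have hsets : ∀ a ∈ insert b s, MeasurableSet (sets a) := fun a _ => by
    simp only [sets]; split_ifs <;> exact measurableSet_singleton _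
  have hinter :
      {ω | ∀ a ∈ s, X a ω = 0} ∩ {ω | X b ω = 1} = ⋂ a ∈ insert b s, X a ⁻¹' sets a := by
    ext ω
    simp only [sets, Set.mem_inter_iff, Set.mem_ofPred_eq, Set.mem_iInter, Finset.mem_insert,
      or_imp, forall_and, forall_eq, and_comm (a := ∀ a ∈ s, _)]
    refine and_congr Iff.rfl (forall₂_congr fun a ha => ?_)
    simp [ne_of_mem_of_not_mem ha hb]
  rw [hinter, measureReal_def, hXind.measure_inter_preimage_eq_mul _ hsets, Finset.prod_insert hb,
    ENNReal.toReal_mul, ENNReal.toReal_prod, mul_comm]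
  congr 1
  · refine Finset.prod_congr rfl fun a ha => ?_
    simp only [sets, if_neg (ne_of_mem_of_not_mem ha hb)]
    exact measureReal_eq_zero_eq_one_sub hX hX01 hq a
  · simp only [sets, if_pos rfl]
    exact hq b

theorem measureReal_forall_eq_zero_inter_le_sum [DecidableEq V] (hXind : iIndepFun X μ)
    {R : Ω → ℝ} (hR : Measurable R) (hXR : IndepFun (fun ω a => X a ω) R μ)
    (hRunif : μ.map R = volume.restrict (Set.Icc 0 1))
    {N : Finset V} {c : V → ℝ} (hc : ∀ a ∈ N, 0 ≤ c a) (hc1 : ∑ a ∈ N, c a ≤ 1) (t : Finset V) :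
    μ.real ({ω | ∀ a ∈ t, X a ω = 0} ∩ {ω | R ω ≤ ∑ a ∈ N, c a * X a ω}) =
      (∏ b ∈ t, (1 - q b)) * ∑ a ∈ N \ t, c a * q a := by
  set Y : Ω → V → ℝ := fun ω a => X a ω
  set g : (V → ℝ) → ℝ := fun y => ∑ a ∈ N, c a * y a
  have hg : Measurable g := Finset.measurable_sum _ fun a _ => by fun_prop
  have hX_mem : ∀ a ω, X a ω ∈ Set.Icc (0 : ℝ) 1 := fun a ω => by
    rcases hX01 a ω with h | h <;> simp [h]
  have hg0 : ∀ ω, 0 ≤ g (Y ω) := fun ω =>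
    Finset.sum_nonneg fun a ha => mul_nonneg (hc a ha) (hX_mem a ω).1
  have hg1 : ∀ ω, g (Y ω) ≤ 1 := fun ω => calc
    g (Y ω) ≤ ∑ a ∈ N, c a :=
      Finset.sum_le_sum fun a ha => mul_le_of_le_one_right (hc a ha) (hX_mem a ω).2
    _ ≤ 1 := hc1
  have hterm : ∀ a ∈ N, c a * μ.real ({ω | ∀ b ∈ t, X b ω = 0} ∩ {ω | X a ω = 1}) =
      if a ∈ t then 0 else c a * ((∏ b ∈ t, (1 - q b)) * q a) := by
    intro a ha
    split_ifs with hat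
    · have hempty : {ω | ∀ b ∈ t, X b ω = 0} ∩ {ω | X a ω = 1} = ∅ :=
        Set.eq_empty_of_forall_notMem fun ω ⟨h0, h1⟩ => zero_ne_one ((h0 a hat).symm.trans h1)
      rw [hempty, measureReal_empty, mul_zero]
    · rw [measureReal_forall_eq_zero_inter_eq_one hX hX01 hq hXind hat]
  calc μ.real ({ω | ∀ a ∈ t, X a ω = 0} ∩ {ω | R ω ≤ ∑ a ∈ N, c a * X a ω})
      = ∫ ω in {ω | ∀ a ∈ t, X a ω = 0}, g (Y ω) ∂μ :=
        measureReal_preimage_inter_le_of_indepFun_uniform (measurable_pi_lambda _ hX) hR hXR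
          hRunif hg hg0 hg1 (measurableSet_forall_mem_eq measurable_pi_apply t 0)
    _ = ∑ a ∈ N, c a * μ.real ({ω | ∀ b ∈ t, X b ω = 0} ∩ {ω | X a ω = 1}) :=
        setIntegral_sum_mul_of_eq_zero_or_eq_one hX hX01 N c _
    _ = ∑ a ∈ N \ t, c a * ((∏ b ∈ t, (1 - q b)) * q a) := by
        rw [Finset.sum_congr rfl hterm, Finset.sum_ite, Finset.sum_const_zero, zero_add,
          Finset.sdiff_eq_filter]
    _ = (∏ b ∈ t, (1 - q b)) * ∑ a ∈ N \ t, c a * q a := by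
        rw [Finset.mul_sum]
        exact Finset.sum_congr rfl fun a _ => by ring

theorem measureReal_activated_inter_forall_eq_zero [DecidableEq V] (hXind : iIndepFun X μ)
    {R : Ω → ℝ} (hR : Measurable R) (hXR : IndepFun (fun ω a => X a ω) R μ)
    (hRunif : μ.map R = volume.restrict (Set.Icc 0 1))
    {N : Finset V} {c : V → ℝ} (hc : ∀ a ∈ N, 0 ≤ c a) (hc1 : ∑ a ∈ N, c a ≤ 1)
    {v : V} (hvN : v ∉ N) {s : Finset V} (hvs : v ∉ s) :
    μ.real ({ω | X v ω = 1 ∨ R ω ≤ ∑ a ∈ N, c a * X a ω} ∩ {ω | ∀ a ∈ s, X a ω = 0}) =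
      (∏ a ∈ s, (1 - q a)) * (q v + (1 - q v) * ∑ a ∈ N \ s, c a * q a) := by
  have hsplit : {ω | X v ω = 1 ∨ R ω ≤ ∑ a ∈ N, c a * X a ω} ∩ {ω | ∀ a ∈ s, X a ω = 0} =
      ({ω | ∀ a ∈ s, X a ω = 0} ∩ {ω | X v ω = 1}) ∪
        ({ω | ∀ a ∈ insert v s, X a ω = 0} ∩ {ω | R ω ≤ ∑ a ∈ N, c a * X a ω}) := by
    ext ω
    simp only [Set.mem_inter_iff, Set.mem_union, Set.mem_ofPred_eq, Finset.forall_mem_insert]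
    rcases hX01 v ω with h | h <;> simp [h, and_comm]
  have hdisj : Disjoint ({ω | ∀ a ∈ s, X a ω = 0} ∩ {ω | X v ω = 1})
      ({ω | ∀ a ∈ insert v s, X a ω = 0} ∩ {ω | R ω ≤ ∑ a ∈ N, c a * X a ω}) :=
    Set.disjoint_left.2 fun ω ⟨_, h1⟩ ⟨h0, _⟩ =>
      zero_ne_one ((h0 v (Finset.mem_insert_self v s)).symm.trans h1)
  have hmeas : MeasurableSet
      ({ω | ∀ a ∈ insert v s, X a ω = 0} ∩ {ω | R ω ≤ ∑ a ∈ N, c a * X a ω}) :=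
    (measurableSet_forall_mem_eq hX _ 0).inter
      (measurableSet_le hR (Finset.measurable_sum _ fun a _ => (hX a).const_mul (c a)))
  rw [hsplit, measureReal_union hdisj hmeas,
    measureReal_forall_eq_zero_inter_eq_one hX hX01 hq hXind hvs,
    measureReal_forall_eq_zero_inter_le_sum hX hX01 hq hXind hR hXR hRunif hc hc1,
    Finset.prod_insert hvs, Finset.sdiff_insert_of_notMem hvN]
  ring

end OneStep

theorem lt_edge_weight_closed_form_general
    {V : Type*} [Fintype V] [DecidableEq V]
    {Ω : Type*} [MeasurableSpace Ω] (μ : Measure Ω) [IsProbabilityMeasure μ]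
    (t : ℕ) (ht : 0 < t)
    (q : V → ℝ) (w : V → V → ℝ)
    (hw : ∀ u v, w u v ∈ Set.Icc (0 : ℝ) 1)
    (hwnorm : ∀ v, ∑ u, w u v ≤ 1)
    (X : Fin t → V → Ω → ℝ) (r : Fin t → V → Ω → ℝ)
    (hXmeas : ∀ i u, Measurable (X i u))
    (hrmeas : ∀ i v, Measurable (r i v))
    (hX01 : ∀ i u ω, X i u ω = 0 ∨ X i u ω = 1)
    (hindep : iIndepFun (m := fun _ : (Fin t × V) ⊕ (Fin t × V) =>
        (inferInstance : MeasurableSpace ℝ))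
      (Sum.elim (fun a => X a.1 a.2) (fun a => r a.1 a.2)) μ)
    (hX : ∀ i u, (μ {ω | X i u ω = 1}).toReal = q u)
    (hr : ∀ i v, Measure.map (r i v) μ = (volume : Measure ℝ).restrict (Set.Icc 0 1))
    (ap : V → ℝ)
    (hap : ∀ v, ap v = (μ {ω | X ⟨0, ht⟩ v ω = 1 ∨
        r ⟨0, ht⟩ v ω ≤ ∑ u ∈ Finset.univ.erase v, w u v * X ⟨0, ht⟩ u ω}).toReal)
    (apb : V → V → ℝ)
    (hapb : ∀ u v, apb u v =
      (μ ({ω | X ⟨0, ht⟩ v ω = 1 ∨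
          r ⟨0, ht⟩ v ω ≤ ∑ u' ∈ Finset.univ.erase v, w u' v * X ⟨0, ht⟩ u' ω} ∩
        {ω | X ⟨0, ht⟩ u ω = 0})).toReal /
      (μ {ω | X ⟨0, ht⟩ u ω = 0}).toReal)
    (u v : V) (huv : u ≠ v)
    (hqu : 0 < q u) (hqu1 : q u < 1) (hqv1 : q v < 1) :
    w u v = (ap v - apb u v) / (q u * (1 - q v)) := by
  set i0 : Fin t := ⟨0, ht⟩
  have hXind : iIndepFun (X i0) μ :=
    hindep.precomp (g := fun a => Sum.inl (i0, a)) fun a b h => by simpa using h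
  have hXR : IndepFun (fun ω a => X i0 a ω) (r i0 v) μ :=
    hindep.indepFun_pi_comp (e := fun a => Sum.inl (i0, a)) (j := Sum.inr (i0, v))
      (by rintro (j | j); exacts [hXmeas j.1 j.2, hrmeas j.1 j.2]) fun _ => Sum.inl_ne_inr
  have hc1 : ∑ a ∈ Finset.univ.erase v, w a v ≤ 1 :=
    (Finset.sum_le_sum_of_subset_of_nonneg (Finset.erase_subset v _)
      fun a _ _ => (hw a v).1).trans (hwnorm v)
  have hact := fun (s : Finset V) (hvs : v ∉ s) =>
    measureReal_activated_inter_forall_eq_zero (hXmeas i0) (hX01 i0) (hX i0) hXind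
      (hrmeas i0 v) hXR (hr i0 v) (fun a _ => (hw a v).1) hc1 (Finset.notMem_erase v _) hvs
  have hap_v : ap v = q v + (1 - q v) * ∑ a ∈ Finset.univ.erase v, w a v * q a := by
    rw [hap v, ← measureReal_def]
    simpa using hact ∅ (Finset.notMem_empty v)
  have hapb_uv : apb u v = q v + (1 - q v) * ∑ a ∈ Finset.univ.erase v \ {u}, w a v * q a := by
    have hB := hact {u} (Finset.notMem_singleton.2 huv.symm)
    simp only [Finset.mem_singleton, forall_eq, Finset.prod_singleton] at hB
    rw [hapb, ← measureReal_def, ← measureReal_def, hB,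
      measureReal_eq_zero_eq_one_sub (hXmeas i0) (hX01 i0) (hX i0),
      mul_div_cancel_left₀ _ (sub_ne_zero.2 hqu1.ne')]
  have hu : {u} ⊆ Finset.univ.erase v := by simpa using huv
  rw [eq_div_iff (mul_pos hqu (sub_pos.2 hqv1)).ne', hap_v, hapb_uv, ← Finset.sum_sdiff hu,
    Finset.sum_singleton]
  ring

/-- **Closed-form expression for LT edge weights.**
In the LT one-step sampling model (seed indicators `X i u ∈ {0,1}` with
`P[X i u = 1] = q u`, thresholds `r i v` uniform on `[0,1]`, all mutually independent;
node `v` is one-step activated in cascade `i` iff `X i v = 1` or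
`∑_{u ≠ v} w u v · X i u ≥ r i v`; `ap v = P[B v]` and `apb u v = P[B v | X u = 0]`
for the first cascade), for any distinct `u, v` with `0 < q u < 1` and `q v < 1`:
`w u v = (ap v − apb u v) / (q u · (1 − q v))`. -/
theorem lt_edge_weight_closed_form
    {V : Type*} [Fintype V] [DecidableEq V]
    {Ω : Type*} [MeasurableSpace Ω] (μ : Measure Ω) [IsProbabilityMeasure μ]
    (t : ℕ) (ht : 0 < t)
    (q : V → ℝ) (w : V → V → ℝ)
    (hq : ∀ u, q u ∈ Set.Icc (0 : ℝ) 1)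
    (hw : ∀ u v, w u v ∈ Set.Icc (0 : ℝ) 1)
    (hwdiag : ∀ v, w v v = 0)
    (hwnorm : ∀ v, ∑ u, w u v ≤ 1)
    (X : Fin t → V → Ω → ℝ) (r : Fin t → V → Ω → ℝ)
    (hXmeas : ∀ i u, Measurable (X i u))
    (hrmeas : ∀ i v, Measurable (r i v))
    (hX01 : ∀ i u ω, X i u ω = 0 ∨ X i u ω = 1)
    (hindep : iIndepFun (m := fun _ : (Fin t × V) ⊕ (Fin t × V) =>
        (inferInstance : MeasurableSpace ℝ))
      (Sum.elim (fun a => X a.1 a.2) (fun a => r a.1 a.2)) μ)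
    (hX : ∀ i u, (μ {ω | X i u ω = 1}).toReal = q u)
    (hr : ∀ i v, Measure.map (r i v) μ = (volume : Measure ℝ).restrict (Set.Icc 0 1))
    (ap : V → ℝ)
    (hap : ∀ v, ap v = (μ {ω | X ⟨0, ht⟩ v ω = 1 ∨
        r ⟨0, ht⟩ v ω ≤ ∑ u ∈ Finset.univ.erase v, w u v * X ⟨0, ht⟩ u ω}).toReal)
    (apb : V → V → ℝ)
    (hapb : ∀ u v, apb u v =
      (μ ({ω | X ⟨0, ht⟩ v ω = 1 ∨
          r ⟨0, ht⟩ v ω ≤ ∑ u' ∈ Finset.univ.erase v, w u' v * X ⟨0, ht⟩ u' ω} ∩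
        {ω | X ⟨0, ht⟩ u ω = 0})).toReal /
      (μ {ω | X ⟨0, ht⟩ u ω = 0}).toReal)
    (u v : V) (huv : u ≠ v)
    (hqu : 0 < q u) (hqu1 : q u < 1) (hqv1 : q v < 1) :
    w u v = (ap v - apb u v) / (q u * (1 - q v)) :=
  lt_edge_weight_closed_form_general μ t ht q w hw hwnorm X r hXmeas hrmeas hX01 hindep hX hr ap hap
    apb hapb u v huv hqu hqu1 hqv1
end

section
/- Let ε > 0 and let w, w' : E → [0,1] be two edge-weight vectors on a finite directed graph G = (V, E) with n = |V| such that (1) Σ_{e ∈ E} |w(e) − w'(e)| ≤ ε/n, and (2) both w and w' satisfy the normalization condition Σ_{u : (u,v) ∈ E} w(u,v) ≤ 1 for every v. Then for every seed set S ⊆ V, the LT influence spreads satisfy |σ^w(S) − σ^{w'}(S)| ≤ ε. -/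
set_option autoImplicit false

/-- LT influence spread via live-edge graphs: the sum ranges over live-edge sets
`A ⊆ E` in which every node has at most one incoming edge; the weight of `A` is
`(∏_{e ∈ A} w e) · ∏_{v with no incoming edge in A} (1 − ∑_{u : (u,v) ∈ E} w (u,v))`
(note `∏_{e ∈ A} w e` equals the product of `w e_v` over nodes `v` having the single
incoming live edge `e_v` in `A`), and `R(A,S)` is the set of nodes reachable from `S`
via edges of `A`. -/
noncomputable def ltSpread {V : Type*} [Fintype V] [DecidableEq V]
    (E : Finset (V × V)) (w : V × V → ℝ) (S : Finset V) : ℝ :=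
  ∑ A ∈ E.powerset.filter (fun A => ∀ v : V, (A.filter fun e => e.2 = v).card ≤ 1),
    ((∏ e ∈ A, w e) *
        ∏ v ∈ Finset.univ.filter (fun v : V => ∀ e ∈ A, e.2 ≠ v),
          (1 - ∑ e ∈ E.filter (fun e => e.2 = v), w e)) *
      (Set.ncard {x : V | ∃ s ∈ S, Relation.ReflTransGen (fun a b => (a, b) ∈ A) s x} : ℝ)

set_option maxHeartbeats 1000000

open Finset


section LT
variable {V : Type*} [Fintype V] [DecidableEq V]

/-- live-edge sets with all edge targets in `T`. -/
def acal (E : Finset (V × V)) (T : Finset V) : Finset (Finset (V × V)) :=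
  (E.filter (fun e => e.2 ∈ T)).powerset.filter
    (fun A => ∀ v : V, (A.filter fun e => e.2 = v).card ≤ 1)

lemma factor (E : Finset (V × V)) (f : V → V × V → ℝ) (f0 : V → ℝ) (T : Finset V) :
    ∑ A ∈ acal E T,
      (∏ e ∈ A, f e.2 e) * ∏ v ∈ T.filter (fun v => ∀ e ∈ A, e.2 ≠ v), f0 v
    = ∏ v ∈ T, (f0 v + ∑ e ∈ E.filter (fun e => e.2 = v), f v e) := by
  induction T using Finset.induction_on with
  | empty => simp [acal, Finset.filter_singleton]
  | @insert a T ha ih =>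
    classical
    set D : Finset (V × V) := E.filter (fun e => e.2 = a) with hD
    set opt : Finset (Finset (V × V)) := insert (∅ : Finset (V × V)) (D.image ({·})) with hopt
    have hDa : ∀ e ∈ D, e.2 = a := fun e he => (mem_filter.mp he).2
    have hDE : ∀ e ∈ D, e ∈ E := fun e he => (mem_filter.mp he).1
    have hopt_mem : ∀ B ∈ opt, B = ∅ ∨ ∃ e ∈ D, B = {e} := by
      intro B hB
      rcases mem_insert.mp hB with h | h
      · exact Or.inl h
      · rcases mem_image.mp h with ⟨e, he, rfl⟩
        exact Or.inr ⟨e, he, rfl⟩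
    have key : ∑ A ∈ acal E (insert a T),
        (∏ e ∈ A, f e.2 e) * ∏ v ∈ (insert a T).filter (fun v => ∀ e ∈ A, e.2 ≠ v), f0 v
      = ∑ p ∈ opt ×ˢ acal E T,
        (∏ e ∈ p.1 ∪ p.2, f e.2 e) *
          ∏ v ∈ (insert a T).filter (fun v => ∀ e ∈ p.1 ∪ p.2, e.2 ≠ v), f0 v := by
      refine Finset.sum_nbij'
        (fun A => (A.filter (fun e => e.2 = a), A.filter (fun e => ¬ e.2 = a)))
        (fun p => p.1 ∪ p.2) ?_ ?_ ?_ ?_ ?_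
      · intro A hA
        obtain ⟨hAsub, hAcard⟩ := mem_filter.mp hA
        rw [mem_powerset] at hAsub
        refine mem_product.mpr ⟨?_, ?_⟩
        · dsimp only
          have hle := hAcard a
          interval_cases h : (A.filter (fun e => e.2 = a)).card
          · rw [Finset.card_eq_zero] at h
            rw [h]; exact mem_insert_self _ _
          · rw [Finset.card_eq_one] at h
            obtain ⟨e, he⟩ := h
            have heA : e ∈ A.filter (fun e => e.2 = a) := by rw [he]; exact mem_singleton_self e
            obtain ⟨heA', hea⟩ := mem_filter.mp heA
            have heD : e ∈ D := mem_filter.mpr ⟨(mem_filter.mp (hAsub heA')).1, hea⟩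
            rw [he]
            exact mem_insert.mpr (Or.inr (mem_image_of_mem _ heD))
        · dsimp only
          refine mem_filter.mpr ⟨mem_powerset.mpr ?_, ?_⟩
          · intro e he
            obtain ⟨heA, hea⟩ := mem_filter.mp he
            have hmem := mem_filter.mp (hAsub heA)
            refine mem_filter.mpr ⟨hmem.1, ?_⟩
            rcases mem_insert.mp hmem.2 with h | h
            · exact absurd h hea
            · exact h
          · intro v
            refine le_trans (Finset.card_le_card ?_) (hAcard v)
            intro e he
            obtain ⟨he1, he2⟩ := mem_filter.mp he
            exact mem_filter.mpr ⟨(mem_filter.mp he1).1, he2⟩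
      · rintro ⟨B, A'⟩ hp
        obtain ⟨hB, hA'⟩ := mem_product.mp hp
        obtain ⟨hA'sub, hA'card⟩ := mem_filter.mp hA'
        rw [mem_powerset] at hA'sub
        have hA'T : ∀ e ∈ A', e.2 ∈ T := fun e he => (mem_filter.mp (hA'sub he)).2
        have hBa : ∀ e ∈ B, e.2 = a := by
          rcases hopt_mem B hB with rfl | ⟨e, he, rfl⟩
          · intro e he; simp at he
          · intro e' he'; rw [mem_singleton.mp he']; exact hDa e he
        have hBE : ∀ e ∈ B, e ∈ E := by
          rcases hopt_mem B hB with rfl | ⟨e, he, rfl⟩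
          · intro e he; simp at he
          · intro e' he'; rw [mem_singleton.mp he']; exact hDE e he
        refine mem_filter.mpr ⟨mem_powerset.mpr ?_, ?_⟩
        · intro e he
          rcases mem_union.mp he with h | h
          · exact mem_filter.mpr ⟨hBE e h, mem_insert.mpr (Or.inl (hBa e h))⟩
          · have hmem := mem_filter.mp (hA'sub h)
            exact mem_filter.mpr ⟨hmem.1, mem_insert.mpr (Or.inr hmem.2)⟩
        · intro v
          rw [Finset.filter_union]
          refine le_trans (Finset.card_union_le _ _) ?_
          by_cases hv : v = a
          · subst hv
            have h1 : B.filter (fun e => e.2 = v) = B :=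
              Finset.filter_true_of_mem (fun e he => hBa e he)
            have h2 : A'.filter (fun e => e.2 = v) = ∅ := by
              refine Finset.filter_false_of_mem ?_
              intro e he hev
              exact ha (by rw [← hev]; exact hA'T e he)
            rw [h1, h2]
            simp only [Finset.card_empty, add_zero]
            rcases hopt_mem B hB with rfl | ⟨e, he, rfl⟩
            · simp
            · simp
          · have h1 : B.filter (fun e => e.2 = v) = ∅ := by
              refine Finset.filter_false_of_mem ?_
              intro e he hev
              exact hv (by rw [← hev, hBa e he])
            rw [h1]
            simpa using hA'card v
      · intro A hA
        dsimp only
        exact Finset.filter_union_filter_not_eq _ A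
      · rintro ⟨B, A'⟩ hp
        obtain ⟨hB, hA'⟩ := mem_product.mp hp
        obtain ⟨hA'sub, hA'card⟩ := mem_filter.mp hA'
        rw [mem_powerset] at hA'sub
        have hA'T : ∀ e ∈ A', e.2 ∈ T := fun e he => (mem_filter.mp (hA'sub he)).2
        have hBa : ∀ e ∈ B, e.2 = a := by
          rcases hopt_mem B hB with rfl | ⟨e, he, rfl⟩
          · intro e he; simp at he
          · intro e' he'; rw [mem_singleton.mp he']; exact hDa e he
        have h1 : (B ∪ A').filter (fun e => e.2 = a) = B := by
          rw [Finset.filter_union,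
            Finset.filter_true_of_mem hBa,
            Finset.filter_false_of_mem
              (fun e he hev => ha (show a ∈ T by rw [← hev]; exact hA'T e he)),
            Finset.union_empty]
        have hx1 : ∀ e ∈ B, ¬ ¬ e.2 = a := fun e he hev => hev (hBa e he)
        have hx2 : ∀ e ∈ A', ¬ e.2 = a :=
          fun e he hev => ha (show a ∈ T by rw [← hev]; exact hA'T e he)
        have h2 : (B ∪ A').filter (fun e => ¬ e.2 = a) = A' := by
          rw [Finset.filter_union, Finset.filter_false_of_mem hx1,
            Finset.filter_true_of_mem hx2, Finset.empty_union]
        dsimp only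
        rw [h1, h2]
      · intro A hA
        dsimp only
        rw [Finset.filter_union_filter_not_eq (fun e => e.2 = a) A]
    rw [key, Finset.sum_product]
    have inner : ∀ B ∈ opt,
        (∑ A' ∈ acal E T, (∏ e ∈ B ∪ A', f e.2 e) *
          ∏ v ∈ (insert a T).filter (fun v => ∀ e ∈ B ∪ A', e.2 ≠ v), f0 v)
        = (if B = ∅ then f0 a else ∏ e ∈ B, f e.2 e) *
          ∑ A' ∈ acal E T, (∏ e ∈ A', f e.2 e) *
            ∏ v ∈ T.filter (fun v => ∀ e ∈ A', e.2 ≠ v), f0 v := by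
      intro B hB
      rw [Finset.mul_sum]
      refine Finset.sum_congr rfl ?_
      intro A' hA'
      obtain ⟨hA'sub, hA'card⟩ := mem_filter.mp hA'
      rw [mem_powerset] at hA'sub
      have hA'T : ∀ e ∈ A', e.2 ∈ T := fun e he => (mem_filter.mp (hA'sub he)).2
      have hBa : ∀ e ∈ B, e.2 = a := by
        rcases hopt_mem B hB with rfl | ⟨e, he, rfl⟩
        · intro e he; simp at he
        · intro e' he'; rw [mem_singleton.mp he']; exact hDa e he
      have hdisj : Disjoint B A' := by
        rw [Finset.disjoint_left]
        intro e heB heA'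
        exact ha ((hBa e heB) ▸ hA'T e heA')
      have hprod : ∏ e ∈ B ∪ A', f e.2 e = (∏ e ∈ B, f e.2 e) * ∏ e ∈ A', f e.2 e :=
        Finset.prod_union hdisj
      have hfiltT : T.filter (fun v => ∀ e ∈ B ∪ A', e.2 ≠ v)
          = T.filter (fun v => ∀ e ∈ A', e.2 ≠ v) := by
        refine Finset.filter_congr ?_
        intro v hv
        constructor
        · intro h e he; exact h e (mem_union_right _ he)
        · intro h e he
          rcases mem_union.mp he with h' | h'
          · intro hev
            apply ha
            have hva : v = a := hev.symm.trans (hBa e h')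
            rwa [hva] at hv
          · exact h e h'
      have hnode : (insert a T).filter (fun v => ∀ e ∈ B ∪ A', e.2 ≠ v)
          = (if B = ∅ then insert a (T.filter (fun v => ∀ e ∈ A', e.2 ≠ v))
             else T.filter (fun v => ∀ e ∈ A', e.2 ≠ v)) := by
        rw [Finset.filter_insert, hfiltT]
        by_cases hBe : B = ∅
        · rw [if_pos hBe, if_pos]
          intro e he
          rcases mem_union.mp he with h' | h'
          · rw [hBe] at h'; simp at h'
          · intro hev; exact ha (by rw [← hev]; exact hA'T e h')
        · rw [if_neg hBe, if_neg]
          obtain ⟨e, he⟩ := Finset.nonempty_iff_ne_empty.mpr hBe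
          intro h
          exact h e (mem_union_left _ he) (hBa e he)
      rw [hprod, hnode]
      by_cases hBe : B = ∅
      · rw [if_pos hBe, if_pos hBe, Finset.prod_insert (fun h => ha (mem_filter.mp h).1)]
        subst hBe
        simp only [Finset.prod_empty, one_mul]
        ring
      · rw [if_neg hBe, if_neg hBe]
        ring
    rw [Finset.sum_congr rfl inner, ← Finset.sum_mul, ih, Finset.prod_insert ha]
    congr 1
    rw [hopt, Finset.sum_insert]
    · rw [if_pos rfl, Finset.sum_image (fun e _ e' _ h => Finset.singleton_injective h)]
      congr 1
      refine Finset.sum_congr rfl ?_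
      intro e he
      rw [if_neg (Finset.singleton_ne_empty e), Finset.prod_singleton, hDa e he]
    · intro h
      rcases mem_image.mp h with ⟨e, _, he⟩
      exact Finset.singleton_ne_empty e he


lemma acal_univ (E : Finset (V × V)) :
    acal E univ
      = E.powerset.filter (fun A => ∀ v : V, (A.filter fun e => e.2 = v).card ≤ 1) := by
  unfold acal
  have : E.filter (fun e => e.2 ∈ univ) = E :=
    Finset.filter_true_of_mem (fun e _ => mem_univ e.2)
  rw [this]

/-- hybrid weights: nodes in `T` use `w`, other nodes use `w'`. -/
def mixw (w w' : V × V → ℝ) (T : Finset V) (v : V) (e : V × V) : ℝ :=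
  if v ∈ T then w e else w' e

/-- hybrid live-edge weight of `A`. -/
noncomputable def pwt (E : Finset (V × V)) (w w' : V × V → ℝ) (T : Finset V)
    (A : Finset (V × V)) : ℝ :=
  (∏ e ∈ A, mixw w w' T e.2 e) *
    ∏ v ∈ univ.filter (fun v : V => ∀ e ∈ A, e.2 ≠ v),
      (1 - ∑ e ∈ E.filter (fun e => e.2 = v), mixw w w' T v e)

lemma sum_pwt (E : Finset (V × V)) (w w' : V × V → ℝ) (T : Finset V) :
    ∑ A ∈ acal E univ, pwt E w w' T A = 1 := by
  have h := factor E (fun v e => mixw w w' T v e)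
    (fun v => 1 - ∑ e ∈ E.filter (fun e => e.2 = v), mixw w w' T v e) univ
  rw [show (∑ A ∈ acal E univ, pwt E w w' T A)
      = ∑ A ∈ acal E univ,
        (∏ e ∈ A, mixw w w' T e.2 e) *
          ∏ v ∈ univ.filter (fun v : V => ∀ e ∈ A, e.2 ≠ v),
            (1 - ∑ e ∈ E.filter (fun e => e.2 = v), mixw w w' T v e) from rfl, h]
  refine Finset.prod_eq_one ?_
  intro v _
  ring

lemma regroup (f : V → V × V → ℝ) (f0 : V → ℝ) (a : V) (A : Finset (V × V)) :
    (∏ e ∈ A, f e.2 e) * ∏ v ∈ univ.filter (fun v : V => ∀ e ∈ A, e.2 ≠ v), f0 v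
    = ((∏ e ∈ A.filter (fun e => e.2 = a), f e.2 e) *
        ∏ v ∈ (univ.filter (fun v : V => ∀ e ∈ A, e.2 ≠ v)).filter (fun v => v = a), f0 v) *
      ((∏ e ∈ A.filter (fun e => ¬ e.2 = a), f e.2 e) *
        ∏ v ∈ (univ.filter (fun v : V => ∀ e ∈ A, e.2 ≠ v)).filter (fun v => ¬ v = a), f0 v) := by
  rw [← Finset.prod_filter_mul_prod_filter_not A (fun e => e.2 = a),
      ← Finset.prod_filter_mul_prod_filter_not
        (univ.filter (fun v : V => ∀ e ∈ A, e.2 ≠ v)) (fun v => v = a)]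
  ring

section Step
variable (E : Finset (V × V)) (w w' : V × V → ℝ)

lemma step
    (hw : ∀ e ∈ E, w e ∈ Set.Icc (0:ℝ) 1) (hw' : ∀ e ∈ E, w' e ∈ Set.Icc (0:ℝ) 1)
    (hwnorm : ∀ v : V, ∑ e ∈ E.filter (fun e => e.2 = v), w e ≤ 1)
    (hw'norm : ∀ v : V, ∑ e ∈ E.filter (fun e => e.2 = v), w' e ≤ 1)
    (a : V) (T : Finset V) (haT : a ∉ T) :
    ∑ A ∈ acal E univ, |pwt E w w' (insert a T) A - pwt E w w' T A|
      ≤ 2 * ∑ e ∈ E.filter (fun e => e.2 = a), |w e - w' e| := by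
  classical
  set fA : V → V × V → ℝ := fun v e => if v = a then |w e - w' e| else mixw w w' T v e with hfA
  set f0A : V → ℝ := fun v =>
    if v = a then |∑ e ∈ E.filter (fun e => e.2 = v), (w e - w' e)|
    else 1 - ∑ e ∈ E.filter (fun e => e.2 = v), mixw w w' T v e with hf0A
  have hmixnn : ∀ (U : Finset V) (v : V) (e : V × V), e ∈ E → 0 ≤ mixw w w' U v e := by
    intro U v e he
    unfold mixw
    by_cases hv : v ∈ U
    · rw [if_pos hv]; exact (hw e he).1
    · rw [if_neg hv]; exact (hw' e he).1
  have hnodenn : ∀ (U : Finset V) (v : V),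
      0 ≤ 1 - ∑ e ∈ E.filter (fun e => e.2 = v), mixw w w' U v e := by
    intro U v
    by_cases hv : v ∈ U
    · have h : ∑ e ∈ E.filter (fun e => e.2 = v), mixw w w' U v e
          = ∑ e ∈ E.filter (fun e => e.2 = v), w e :=
        Finset.sum_congr rfl (fun e _ => by unfold mixw; rw [if_pos hv])
      rw [h]; linarith [hwnorm v]
    · have h : ∑ e ∈ E.filter (fun e => e.2 = v), mixw w w' U v e
          = ∑ e ∈ E.filter (fun e => e.2 = v), w' e :=
        Finset.sum_congr rfl (fun e _ => by unfold mixw; rw [if_neg hv])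
      rw [h]; linarith [hw'norm v]
  have perA : ∀ A ∈ acal E univ,
      |pwt E w w' (insert a T) A - pwt E w w' T A|
      = (∏ e ∈ A, fA e.2 e) *
          ∏ v ∈ univ.filter (fun v : V => ∀ e ∈ A, e.2 ≠ v), f0A v := by
    intro A hA
    obtain ⟨hAsub, hAcard⟩ := mem_filter.mp hA
    rw [mem_powerset] at hAsub
    have hAE : ∀ e ∈ A, e ∈ E := fun e he => (mem_filter.mp (hAsub he)).1
    set N := univ.filter (fun v : V => ∀ e ∈ A, e.2 ≠ v) with hN
    set restE : ℝ := ∏ e ∈ A.filter (fun e => ¬ e.2 = a), mixw w w' T e.2 e with hrE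
    set restN : ℝ := ∏ v ∈ N.filter (fun v => ¬ v = a),
        (1 - ∑ e ∈ E.filter (fun e => e.2 = v), mixw w w' T v e) with hrN
    have hrest_nn : 0 ≤ restE * restN := by
      apply mul_nonneg
      · exact Finset.prod_nonneg (fun e he => hmixnn T e.2 e (hAE e (mem_filter.mp he).1))
      · exact Finset.prod_nonneg (fun v _ => hnodenn T v)
    have heq_ins : ∏ e ∈ A.filter (fun e => ¬ e.2 = a), mixw w w' (insert a T) e.2 e
        = restE := by
      refine Finset.prod_congr rfl ?_
      intro e he
      have hne : ¬ e.2 = a := (mem_filter.mp he).2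
      unfold mixw
      by_cases h2 : e.2 ∈ T
      · rw [if_pos (mem_insert_of_mem h2), if_pos h2]
      · rw [if_neg (fun hmem => (mem_insert.mp hmem).elim hne h2), if_neg h2]
    have heq_fA : ∏ e ∈ A.filter (fun e => ¬ e.2 = a), fA e.2 e = restE := by
      refine Finset.prod_congr rfl ?_
      intro e he
      rw [hfA]
      simp only
      rw [if_neg (mem_filter.mp he).2]
    have hnode_ins : ∏ v ∈ N.filter (fun v => ¬ v = a),
        (1 - ∑ e ∈ E.filter (fun e => e.2 = v), mixw w w' (insert a T) v e) = restN := by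
      refine Finset.prod_congr rfl ?_
      intro v hv
      have hva : ¬ v = a := (mem_filter.mp hv).2
      congr 1
      refine Finset.sum_congr rfl ?_
      intro e _
      unfold mixw
      by_cases h2 : v ∈ T
      · rw [if_pos (mem_insert_of_mem h2), if_pos h2]
      · rw [if_neg (fun hmem => (mem_insert.mp hmem).elim hva h2), if_neg h2]
    have hnode_fA : ∏ v ∈ N.filter (fun v => ¬ v = a), f0A v = restN := by
      refine Finset.prod_congr rfl ?_
      intro v hv
      rw [hf0A]
      simp only
      rw [if_neg (mem_filter.mp hv).2]
    rcases Nat.le_one_iff_eq_zero_or_eq_one.mp (hAcard a) with h0 | h1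
    · -- no incoming edge at a
      have hfil : A.filter (fun e => e.2 = a) = ∅ := Finset.card_eq_zero.mp h0
      have hnoe : ∀ e ∈ A, e.2 ≠ a := by
        intro e he hea
        have hmem : e ∈ A.filter (fun e => e.2 = a) := mem_filter.mpr ⟨he, hea⟩
        rw [hfil] at hmem
        simp at hmem
      have haN : a ∈ N := mem_filter.mpr ⟨mem_univ a, fun e he => hnoe e he⟩
      have hNa : N.filter (fun v => v = a) = {a} := by
        ext v
        simp only [mem_filter, mem_singleton]
        constructor
        · rintro ⟨_, h⟩; exact h
        · rintro rfl; exact ⟨haN, rfl⟩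
      have e_ins : pwt E w w' (insert a T) A
          = (1 - ∑ e ∈ E.filter (fun e => e.2 = a), w e) * (restE * restN) := by
        unfold pwt
        rw [regroup (mixw w w' (insert a T)) _ a A, ← hN, hfil, Finset.prod_empty, hNa,
          Finset.prod_singleton, heq_ins, hnode_ins, one_mul]
        congr 2
        refine Finset.sum_congr rfl ?_
        intro e _
        unfold mixw
        rw [if_pos (mem_insert_self a T)]
      have e_T : pwt E w w' T A
          = (1 - ∑ e ∈ E.filter (fun e => e.2 = a), w' e) * (restE * restN) := by
        unfold pwt
        rw [regroup (mixw w w' T) _ a A, ← hN, hfil, Finset.prod_empty, hNa,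
          Finset.prod_singleton, one_mul]
        congr 2
        refine Finset.sum_congr rfl ?_
        intro e _
        unfold mixw
        rw [if_neg haT]
      have e_fA : (∏ e ∈ A, fA e.2 e) * ∏ v ∈ N, f0A v
          = |∑ e ∈ E.filter (fun e => e.2 = a), (w e - w' e)| * (restE * restN) := by
        rw [regroup fA f0A a A, ← hN, hfil, Finset.prod_empty, hNa,
          Finset.prod_singleton, heq_fA, hnode_fA, one_mul]
        congr 2
        rw [hf0A]
        simp only
        rw [if_true]
      rw [e_ins, e_T, e_fA, ← sub_mul, abs_mul, abs_of_nonneg hrest_nn]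
      congr 1
      rw [show (1 - ∑ e ∈ E.filter (fun e => e.2 = a), w e)
            - (1 - ∑ e ∈ E.filter (fun e => e.2 = a), w' e)
          = -((∑ e ∈ E.filter (fun e => e.2 = a), w e)
            - ∑ e ∈ E.filter (fun e => e.2 = a), w' e) by ring,
        abs_neg, ← Finset.sum_sub_distrib]
    · -- exactly one incoming edge e0 at a
      obtain ⟨e0, he0⟩ := Finset.card_eq_one.mp h1
      have he0m : e0 ∈ A.filter (fun e => e.2 = a) := by rw [he0]; exact mem_singleton_self e0
      obtain ⟨he0A, he0a⟩ := mem_filter.mp he0m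
      have haN' : a ∉ N := by
        intro h
        exact (mem_filter.mp h).2 e0 he0A he0a
      have hNa : N.filter (fun v => v = a) = ∅ := by
        refine Finset.filter_false_of_mem ?_
        intro v hv hva
        exact haN' (hva ▸ hv)
      have e_ins : pwt E w w' (insert a T) A = w e0 * (restE * restN) := by
        unfold pwt
        rw [regroup (mixw w w' (insert a T)) _ a A, ← hN, he0, Finset.prod_singleton, hNa,
          Finset.prod_empty, heq_ins, hnode_ins, mul_one]
        congr 1
        unfold mixw
        rw [if_pos (by rw [he0a]; exact mem_insert_self a T)]
      have e_T : pwt E w w' T A = w' e0 * (restE * restN) := by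
        unfold pwt
        rw [regroup (mixw w w' T) _ a A, ← hN, he0, Finset.prod_singleton, hNa,
          Finset.prod_empty, mul_one]
        congr 1
        unfold mixw
        rw [if_neg (by rw [he0a]; exact haT)]
      have e_fA : (∏ e ∈ A, fA e.2 e) * ∏ v ∈ N, f0A v
          = |w e0 - w' e0| * (restE * restN) := by
        rw [regroup fA f0A a A, ← hN, he0, Finset.prod_singleton, hNa,
          Finset.prod_empty, heq_fA, hnode_fA, mul_one]
        congr 1
        rw [hfA]
        simp only
        rw [if_pos he0a]
      rw [e_ins, e_T, e_fA, ← sub_mul, abs_mul, abs_of_nonneg hrest_nn]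
  rw [Finset.sum_congr rfl perA, factor E fA f0A univ]
  rw [Finset.prod_eq_single_of_mem a (mem_univ a) ?side]
  case side =>
    intro b _ hba
    have h1 : f0A b = 1 - ∑ e ∈ E.filter (fun e => e.2 = b), mixw w w' T b e := by
      rw [hf0A]; simp only; rw [if_neg hba]
    have h2 : ∑ e ∈ E.filter (fun e => e.2 = b), fA b e
        = ∑ e ∈ E.filter (fun e => e.2 = b), mixw w w' T b e := by
      refine Finset.sum_congr rfl ?_
      intro e _
      rw [hfA]; simp only; rw [if_neg hba]
    rw [h1, h2]; ring
  have h1 : f0A a = |∑ e ∈ E.filter (fun e => e.2 = a), (w e - w' e)| := by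
    rw [hf0A]; simp only; rw [if_true]
  have h2 : ∑ e ∈ E.filter (fun e => e.2 = a), fA a e
      = ∑ e ∈ E.filter (fun e => e.2 = a), |w e - w' e| := by
    refine Finset.sum_congr rfl ?_
    intro e _
    rw [hfA]; simp only; rw [if_true]
  rw [h1, h2]
  have h3 : |∑ e ∈ E.filter (fun e => e.2 = a), (w e - w' e)|
      ≤ ∑ e ∈ E.filter (fun e => e.2 = a), |w e - w' e| :=
    Finset.abs_sum_le_sum_abs _ _
  linarith


lemma hyb
    (hw : ∀ e ∈ E, w e ∈ Set.Icc (0:ℝ) 1) (hw' : ∀ e ∈ E, w' e ∈ Set.Icc (0:ℝ) 1)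
    (hwnorm : ∀ v : V, ∑ e ∈ E.filter (fun e => e.2 = v), w e ≤ 1)
    (hw'norm : ∀ v : V, ∑ e ∈ E.filter (fun e => e.2 = v), w' e ≤ 1)
    (T : Finset V) :
    ∑ A ∈ acal E univ, |pwt E w w' T A - pwt E w w' ∅ A|
      ≤ 2 * ∑ e ∈ E.filter (fun e => e.2 ∈ T), |w e - w' e| := by
  induction T using Finset.induction_on with
  | empty => simp
  | @insert a T ha ih =>
    have tri : ∑ A ∈ acal E univ, |pwt E w w' (insert a T) A - pwt E w w' ∅ A|
        ≤ (∑ A ∈ acal E univ, |pwt E w w' (insert a T) A - pwt E w w' T A|)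
          + ∑ A ∈ acal E univ, |pwt E w w' T A - pwt E w w' ∅ A| := by
      rw [← Finset.sum_add_distrib]
      refine Finset.sum_le_sum ?_
      intro A _
      exact abs_sub_le _ _ _
    have hstep := step E w w' hw hw' hwnorm hw'norm a T ha
    have hpred : E.filter (fun e => e.2 ∈ insert a T)
        = E.filter (fun e => e.2 = a) ∪ E.filter (fun e => e.2 ∈ T) := by
      rw [← Finset.filter_or]
      refine Finset.filter_congr ?_
      intro e _
      exact Finset.mem_insert
    have hd : Disjoint (E.filter (fun e => e.2 = a)) (E.filter (fun e => e.2 ∈ T)) := by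
      rw [Finset.disjoint_left]
      intro e h1 h2
      exact ha ((mem_filter.mp h1).2 ▸ (mem_filter.mp h2).2)
    rw [hpred, Finset.sum_union hd]
    linarith

lemma lt_eq (S : Finset V) :
    ltSpread E w S = ∑ A ∈ acal E univ, pwt E w w' univ A *
      (Set.ncard {x : V | ∃ s ∈ S, Relation.ReflTransGen (fun a b => (a, b) ∈ A) s x} : ℝ) := by
  rw [ltSpread, ← acal_univ]
  refine Finset.sum_congr rfl ?_
  intro A _
  congr 1 <;> simp [pwt, mixw]

lemma lt_eq' (S : Finset V) :
    ltSpread E w' S = ∑ A ∈ acal E univ, pwt E w w' ∅ A *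
      (Set.ncard {x : V | ∃ s ∈ S, Relation.ReflTransGen (fun a b => (a, b) ∈ A) s x} : ℝ) := by
  rw [ltSpread, ← acal_univ]
  refine Finset.sum_congr rfl ?_
  intro A _
  congr 1 <;> simp [pwt, mixw]

end Step
end LT

/-- **Lipschitz continuity of the LT influence spread in the edge weights.**
Let `ε > 0` and `w, w' : E → [0,1]` two edge-weight vectors on a finite directed graph
`G = (V, E)` with `n = |V|` such that (1) `∑_{e ∈ E} |w e − w' e| ≤ ε/n`, and (2) both
`w` and `w'` satisfy the normalization condition `∑_{u : (u,v) ∈ E} w (u,v) ≤ 1` for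
every `v`. Then for every seed set `S ⊆ V`, `|σ^w(S) − σ^{w'}(S)| ≤ ε`. -/
theorem ltSpread_close
    {V : Type*} [Fintype V] [DecidableEq V]
    (E : Finset (V × V)) (w w' : V × V → ℝ)
    (hw : ∀ e ∈ E, w e ∈ Set.Icc (0 : ℝ) 1)
    (hw' : ∀ e ∈ E, w' e ∈ Set.Icc (0 : ℝ) 1)
    (hwnorm : ∀ v : V, ∑ e ∈ E.filter (fun e => e.2 = v), w e ≤ 1)
    (hw'norm : ∀ v : V, ∑ e ∈ E.filter (fun e => e.2 = v), w' e ≤ 1)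
    (ε : ℝ) (hε : 0 < ε)
    (hsum : ∑ e ∈ E, |w e - w' e| ≤ ε / (Fintype.card V : ℝ))
    (S : Finset V) :
    |ltSpread E w S - ltSpread E w' S| ≤ ε := by
  classical
  by_cases hn : Fintype.card V = 0
  · haveI : IsEmpty V := Fintype.card_eq_zero_iff.mp hn
    have hz : ∀ (w0 : V × V → ℝ), ltSpread E w0 S = 0 := by
      intro w0
      rw [ltSpread]
      refine Finset.sum_eq_zero ?_
      intro A _
      have hset : {x : V | ∃ s ∈ S, Relation.ReflTransGen (fun a b => (a, b) ∈ A) s x} = ∅ :=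
        Set.eq_empty_of_isEmpty _
      rw [hset, Set.ncard_empty]
      norm_num
    rw [hz w, hz w', sub_zero, abs_zero]
    linarith
  · set n : ℝ := (Fintype.card V : ℝ) with hndef
    have hnpos : (0:ℝ) < n := by
      rw [hndef]
      exact_mod_cast Nat.pos_of_ne_zero hn
    set rc : Finset (V × V) → ℝ := fun A =>
      (Set.ncard {x : V | ∃ s ∈ S, Relation.ReflTransGen (fun a b => (a, b) ∈ A) s x} : ℝ)
      with hrc
    set pU : Finset (V × V) → ℝ := fun A => pwt E w w' Finset.univ A with hpU
    set pO : Finset (V × V) → ℝ := fun A => pwt E w w' ∅ A with hpO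
    have hr0 : ∀ A, (0:ℝ) ≤ rc A := fun A => Nat.cast_nonneg _
    have hrn : ∀ A, rc A ≤ n := by
      intro A
      rw [hrc, hndef]
      dsimp only
      have hle : ({x : V | ∃ s ∈ S,
          Relation.ReflTransGen (fun a b => (a, b) ∈ A) s x}).ncard
          ≤ (Set.univ : Set V).ncard :=
        Set.ncard_le_ncard (Set.subset_univ _) Set.finite_univ
      rw [Set.ncard_univ, Nat.card_eq_fintype_card] at hle
      exact_mod_cast hle
    have hzero : ∑ A ∈ acal E Finset.univ, (pU A - pO A) = 0 := by
      rw [Finset.sum_sub_distrib]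
      rw [hpU, hpO]
      rw [sum_pwt, sum_pwt, sub_self]
    have key : ltSpread E w S - ltSpread E w' S
        = ∑ A ∈ acal E Finset.univ, (pU A - pO A) * (rc A - n / 2) := by
      rw [lt_eq E w w' S, lt_eq' E w w' S, ← Finset.sum_sub_distrib]
      have expand : ∑ A ∈ acal E Finset.univ, (pU A - pO A) * (rc A - n / 2)
          = (∑ A ∈ acal E Finset.univ, (pU A * rc A - pO A * rc A))
            - (n / 2) * ∑ A ∈ acal E Finset.univ, (pU A - pO A) := by
        rw [Finset.mul_sum, ← Finset.sum_sub_distrib]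
        refine Finset.sum_congr rfl ?_
        intro A _
        ring
      rw [expand, hzero, mul_zero, sub_zero]
    rw [key]
    have b1 : |∑ A ∈ acal E Finset.univ, (pU A - pO A) * (rc A - n / 2)|
        ≤ ∑ A ∈ acal E Finset.univ, |pU A - pO A| * (n / 2) := by
      refine le_trans (Finset.abs_sum_le_sum_abs _ _) ?_
      refine Finset.sum_le_sum ?_
      intro A _
      rw [abs_mul]
      refine mul_le_mul_of_nonneg_left ?_ (abs_nonneg _)
      rw [abs_le]
      constructor
      · linarith [hr0 A]
      · linarith [hrn A]
    have b2 : ∑ A ∈ acal E Finset.univ, |pU A - pO A|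
        ≤ 2 * ∑ e ∈ E, |w e - w' e| := by
      have h := hyb E w w' hw hw' hwnorm hw'norm Finset.univ
      have hfil : E.filter (fun e => e.2 ∈ Finset.univ) = E :=
        Finset.filter_true_of_mem (fun e _ => Finset.mem_univ _)
      rw [hfil] at h
      exact h
    have b3 : ∑ A ∈ acal E Finset.univ, |pU A - pO A| * (n / 2)
        = (∑ A ∈ acal E Finset.univ, |pU A - pO A|) * (n / 2) := by
      rw [Finset.sum_mul]
    refine le_trans b1 ?_
    rw [b3]
    have b4 : (∑ A ∈ acal E Finset.univ, |pU A - pO A|) * (n / 2)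
        ≤ (2 * (ε / n)) * (n / 2) := by
      refine mul_le_mul_of_nonneg_right ?_ (by positivity)
      refine le_trans b2 ?_
      have := hsum
      nlinarith
    refine le_trans b4 ?_
    have : (2 * (ε / n)) * (n / 2) = ε := by
      field_simp
    rw [this]
end

section
/- Let V be a finite set, k a positive integer, κ ∈ (0,1] and ε ∈ (0,1/3). Let σ, σ', σ̂ : 2^V → ℝ be set functions such that σ(S) ≤ σ'(S) for every S ⊆ V and |σ̂(S) − σ'(S)| ≤ εk/2 for every S ⊆ V. Let S* be a set with |S*| ≤ k attaining σ(S*) = max_{|T| ≤ k} σ(T), and suppose σ(S*) ≥ k. If a set T₁ satisfies σ̂(T₁) ≥ κ(1 − 2ε) · σ̂(S*), then σ'(T₁) ≥ (κ − 3ε) · σ(S*). -/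
set_option autoImplicit false

/-- **Approximation transfer among three set functions.**
Let `V` be a finite set, `k` a positive integer, `κ ∈ (0,1]` and `ε ∈ (0,1/3)`.
Let `σ, σ', σh : 2^V → ℝ` with `σ S ≤ σ' S` for every `S` and `|σh S − σ' S| ≤ εk/2`
for every `S`. Let `S*` with `|S*| ≤ k` attain `σ S* = max_{|T| ≤ k} σ T`, and suppose
`σ S* ≥ k`. If a set `T₁` satisfies `σh T₁ ≥ κ(1 − 2ε) · σh S*`, then
`σ' T₁ ≥ (κ − 3ε) · σ S*`. -/
theorem approx_transfer_three
    {V : Type*} [Fintype V] [DecidableEq V]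
    (k : ℕ) (hk : 0 < k) (κ ε : ℝ)
    (hκ : κ ∈ Set.Ioc (0 : ℝ) 1) (hε : ε ∈ Set.Ioo (0 : ℝ) (1 / 3))
    (σ σ' σh : Finset V → ℝ)
    (hle : ∀ S : Finset V, σ S ≤ σ' S)
    (hclose : ∀ S : Finset V, |σh S - σ' S| ≤ ε * k / 2)
    (Sstar : Finset V) (hSstar_card : Sstar.card ≤ k)
    (hSstar_opt : ∀ T : Finset V, T.card ≤ k → σ T ≤ σ Sstar)
    (hSstar_lb : (k : ℝ) ≤ σ Sstar)
    (T₁ : Finset V)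
    (hT₁ : κ * (1 - 2 * ε) * σh Sstar ≤ σh T₁) :
    (κ - 3 * ε) * σ Sstar ≤ σ' T₁ := by
  obtain ⟨hκ0, hκ1⟩ := hκ
  obtain ⟨hε0, hε1⟩ := hε
  have h1 := abs_le.mp (hclose T₁)
  have h2 := abs_le.mp (hclose Sstar)
  have h3 := hle Sstar
  have hk' : (0:ℝ) < k := by exact_mod_cast hk
  set c := κ * (1 - 2 * ε) with hc
  have hc0 : 0 ≤ c := mul_nonneg hκ0.le (by linarith)
  have hc1 : c ≤ 1 := mul_le_one₀ hκ1 (by linarith) (by linarith)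
  have h4 : σ Sstar - ε * k / 2 ≤ σh Sstar := by linarith [h2.1, h3]
  have h5 : c * (σ Sstar - ε * k / 2) ≤ c * σh Sstar :=
    mul_le_mul_of_nonneg_left h4 hc0
  have h6 : ε * k ≤ ε * σ Sstar := mul_le_mul_of_nonneg_left hSstar_lb hε0.le
  have h7 : c * (ε * k / 2) ≤ ε * k / 2 := by nlinarith
  have h8 : (c - ε) * σ Sstar ≤ σ' T₁ := by nlinarith [h1.2]
  have h9 : κ - 3 * ε ≤ c - ε := by nlinarith
  nlinarith [hk'.trans_le hSstar_lb]
end
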